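/- arXiv:1312.3358 — 5 statements merged into one kernel-verified Lean document; each statement's English description precedes it below -/
import Mathlib

section
/- A nonzero symmetric traceless real 3×3 matrix Q satisfies 6·(tr Q³)² = |Q|⁶ if and only if Q is uniaxial, i.e., Q = s(n⊗n − I/3) for some real number s and some unit vector n ∈ ℝ³. -/
open Matrix

noncomputable section

/-- 3×3 real matrices. -/
abbrev Mat3 := Matrix (Fin 3) (Fin 3) ℝ

/-- `S₀`: symmetric traceless 3×3 real matrices. -/
def S0 (Q : Mat3) : Prop := Q.IsSymm ∧ Q.trace = 0

/-- `|Q|² = tr(Q²)`. -/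
def nsq (Q : Mat3) : ℝ := Matrix.trace (Q * Q)

/-- `tr Q³`. -/
def tr3 (Q : Mat3) : ℝ := Matrix.trace (Q * Q * Q)

/-- `n` is a unit vector in `ℝ³`. -/
def unitVec (n : Fin 3 → ℝ) : Prop := ∑ i, (n i) ^ 2 = 1

/-- The uniaxial tensor `s (n⊗n − I/3)`. -/
def uni (s : ℝ) (n : Fin 3 → ℝ) : Mat3 :=
  s • (Matrix.vecMulVec n n - (1 / 3 : ℝ) • (1 : Mat3))

/-!
A traceless `3 × 3` matrix satisfies `Q³ = (|Q|²/2) Q + (tr Q³/3) I` (Cayley–Hamilton). If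
`6 (tr Q³)² = |Q|⁶ ≠ 0` and `s = 3 tr Q³ / |Q|²`, this cubic factors as `(Q - 2s/3)(Q + s/3)² = 0`.
For a real symmetric matrix the repeated factor can be dropped, since a symmetric matrix with zero
square vanishes. Hence `P = (Q + s/3)/s` is a symmetric idempotent of trace one, i.e. the orthogonal
projection `n ⊗ n` onto a line, and `Q = s (P - I/3)`. Conversely `|s (n ⊗ n - I/3)|² = 2s²/3` and
`tr (s (n ⊗ n - I/3))³ = 2s³/9`.
-/

namespace Matrix

variable {m : Type*} [Fintype m]

theorem IsSymm.trace_mul_self_eq_zero_iff {A : Matrix m m ℝ} (hA : A.IsSymm) :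
    trace (A * A) = 0 ↔ A = 0 := by
  simpa [conjTranspose_eq_transpose_of_trivial, hA.eq] using
    trace_conjTranspose_mul_self_eq_zero_iff (A := A)

theorem IsSymm.trace_mul_self_pos {A : Matrix m m ℝ} (hA : A.IsSymm) (hne : A ≠ 0) :
    0 < trace (A * A) := by
  refine lt_of_le_of_ne ?_ (Ne.symm (hA.trace_mul_self_eq_zero_iff.not.mpr hne))
  simpa [conjTranspose_eq_transpose_of_trivial, hA.eq] using
    (posSemidef_conjTranspose_mul_self A).trace_nonneg

theorem IsSymm.dotProduct_self_row_of_isIdempotentElem {P : Matrix m m ℝ} (hP : P.IsSymm)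
    (hidem : IsIdempotentElem P) (i : m) : P i ⬝ᵥ P i = P i i := by
  conv_rhs => rw [← hidem.eq, mul_apply]
  simp only [dotProduct, hP.apply]

variable [DecidableEq m]

theorem IsSymm.mul_sub_smul_one_eq_zero_of_mul_sq_eq_zero {Q : Matrix m m ℝ} (hQ : Q.IsSymm)
    {a b : ℝ} (h : (Q - a • 1) * (Q - b • 1) * (Q - b • 1) = 0) :
    (Q - a • 1) * (Q - b • 1) = 0 := by
  have hcomm : Commute (Q - a • 1) (Q - b • 1) := by
    simp only [Commute, SemiconjBy, sub_mul, mul_sub, smul_mul_assoc, mul_smul_comm, mul_one,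
      one_mul]
    module
  have hsymm : ((Q - a • 1) * (Q - b • 1)).IsSymm := by
    rw [IsSymm, transpose_mul, (hQ.sub (isSymm_one.smul b)).eq, (hQ.sub (isSymm_one.smul a)).eq]
    exact hcomm.symm.eq
  refine hsymm.trace_mul_self_eq_zero_iff.mp ?_
  have hsq : (Q - a • 1) * (Q - b • 1) * ((Q - a • 1) * (Q - b • 1)) = 0 := by
    rw [← mul_assoc, mul_assoc (Q - a • 1) (Q - b • 1), ← hcomm.eq, mul_assoc (Q - a • 1), h,
      mul_zero]
  rw [hsq, trace_zero]

theorem IsSymm.eq_smul_vecMulVec_of_isIdempotentElem {P : Matrix m m ℝ} (hP : P.IsSymm)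
    (hidem : IsIdempotentElem P) (htr : P.trace = 1) {i : m} (hi : P i i ≠ 0) :
    P = (P i i)⁻¹ • vecMulVec (P i) (P i) := by
  have hvecMul : P i ᵥ* P = P i := by rw [← mul_apply_eq_vecMul, hidem.eq]
  have hmulVec : P *ᵥ P i = P i := by rw [← vecMul_transpose, hP.eq, hvecMul]
  have hdot := hP.dotProduct_self_row_of_isIdempotentElem hidem i
  set W := vecMulVec (P i) (P i)
  have hPW : P * W = W := by rw [mul_vecMulVec, hmulVec]
  have hWP : W * P = W := by rw [vecMulVec_mul, hvecMul]
  have hWW : W * W = P i i • W := by rw [vecMulVec_mul_vecMulVec, hdot, vecMulVec_smul]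
  -- `R` is a symmetric idempotent of trace zero, hence zero.
  set R := P - (P i i)⁻¹ • W with hR
  have hRsymm : R.IsSymm :=
    hP.sub ((IsSymm.ext_iff.mpr fun j k => by simp [W, vecMulVec_apply, mul_comm]).smul _)
  have hRidem : R * R = R := by
    simp only [hR, sub_mul, mul_sub, smul_mul_assoc, mul_smul_comm, hPW, hWP, hWW, hidem.eq,
      smul_smul]
    rw [inv_mul_cancel₀ hi, one_smul, sub_self, smul_zero, sub_zero]
  have hRtr : R.trace = 0 := by
    rw [hR, trace_sub, trace_smul, htr, trace_vecMulVec, hdot, smul_eq_mul, inv_mul_cancel₀ hi,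
      sub_self]
  rw [← sub_eq_zero, ← hRsymm.trace_mul_self_eq_zero_iff, hRidem, hRtr]

theorem IsSymm.exists_eq_vecMulVec_of_isIdempotentElem {P : Matrix m m ℝ} (hP : P.IsSymm)
    (hidem : IsIdempotentElem P) (htr : P.trace = 1) :
    ∃ n : m → ℝ, ∑ k, n k ^ 2 = 1 ∧ P = vecMulVec n n := by
  obtain ⟨i, -, hi⟩ : ∃ i ∈ Finset.univ, P i i ≠ 0 :=
    Finset.exists_ne_zero_of_sum_ne_zero (htr.trans_ne one_ne_zero)
  have hdot := hP.dotProduct_self_row_of_isIdempotentElem hidem i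
  have hpos : 0 < P i i := lt_of_le_of_ne (hdot ▸ dotProduct_self_star_nonneg _) hi.symm
  refine ⟨(√(P i i))⁻¹ • P i, ?_, ?_⟩
  · calc ∑ k, ((√(P i i))⁻¹ • P i) k ^ 2 = (√(P i i))⁻¹ ^ 2 * (P i ⬝ᵥ P i) := by
          rw [dotProduct, Finset.mul_sum]
          exact Finset.sum_congr rfl fun k _ => by rw [Pi.smul_apply, smul_eq_mul]; ring
      _ = 1 := by rw [hdot, inv_pow, Real.sq_sqrt hpos.le, inv_mul_cancel₀ hi]
  · conv_lhs => rw [hP.eq_smul_vecMulVec_of_isIdempotentElem hidem htr hi]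
    rw [smul_vecMulVec, vecMulVec_smul, smul_smul, ← mul_inv, Real.mul_self_sqrt hpos.le]

theorem cube_eq_of_trace_eq_zero_fin_three {K : Type*} [Field K] [CharZero K]
    {Q : Matrix (Fin 3) (Fin 3) K} (htr : Q.trace = 0) :
    Q * Q * Q = (trace (Q * Q) / 2) • Q + (trace (Q * Q * Q) / 3) • 1 := by
  have h22 : Q 2 2 = -Q 0 0 - Q 1 1 := by
    rw [trace_fin_three] at htr
    linear_combination htr
  ext i j
  fin_cases i <;> fin_cases j <;>
    simp [trace_fin_three, mul_apply, Fin.sum_univ_three, h22] <;> ring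

end Matrix

theorem nsq_uni (s : ℝ) {n : Fin 3 → ℝ} (hn : unitVec n) : nsq (uni s n) = 2 / 3 * s ^ 2 := by
  rw [unitVec, Fin.sum_univ_three] at hn
  simp only [nsq, uni, trace_fin_three, mul_apply, Fin.sum_univ_three, Matrix.smul_apply,
    Matrix.sub_apply, vecMulVec_apply, one_apply, smul_eq_mul, Fin.reduceEq, if_true, if_false]
  linear_combination s ^ 2 * (n 0 ^ 2 + n 1 ^ 2 + n 2 ^ 2 + 1 / 3) * hn

theorem tr3_uni (s : ℝ) {n : Fin 3 → ℝ} (hn : unitVec n) : tr3 (uni s n) = 2 / 9 * s ^ 3 := by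
  rw [unitVec, Fin.sum_univ_three] at hn
  simp only [tr3, uni, trace_fin_three, mul_apply, Fin.sum_univ_three, Matrix.smul_apply,
    Matrix.sub_apply, vecMulVec_apply, one_apply, smul_eq_mul, Fin.reduceEq, if_true, if_false]
  linear_combination s ^ 3 * ((n 0 ^ 2 + n 1 ^ 2 + n 2 ^ 2) ^ 2 + 1 / 3) * hn

theorem exists_mul_sub_smul_one_eq_zero_of_sq_tr3_eq {Q : Mat3} (hsymm : Q.IsSymm)
    (htr : Q.trace = 0) (hne : Q ≠ 0) (h : 6 * tr3 Q ^ 2 = nsq Q ^ 3) :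
    ∃ s : ℝ, s ≠ 0 ∧ (Q - (2 * s / 3) • 1) * (Q - (-(s / 3)) • 1) = 0 := by
  have ht2 : nsq Q ≠ 0 := (hsymm.trace_mul_self_pos hne).ne'
  set s := 3 * tr3 Q / nsq Q
  have hs2 : s ^ 2 = 3 * nsq Q / 2 := by
    rw [div_pow, div_eq_iff (pow_ne_zero _ ht2)]
    linear_combination 3 / 2 * h
  have hs3 : s ^ 3 = 9 * tr3 Q / 2 := by
    rw [div_pow, div_eq_iff (pow_ne_zero _ ht2)]
    linear_combination 9 / 2 * tr3 Q * h
  refine ⟨s, fun hs => ht2 (by rw [hs, zero_pow two_ne_zero] at hs2; linarith), ?_⟩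
  refine hsymm.mul_sub_smul_one_eq_zero_of_mul_sq_eq_zero ?_
  calc (Q - (2 * s / 3) • 1) * (Q - (-(s / 3)) • 1) * (Q - (-(s / 3)) • 1)
      = Q * Q * Q - (s ^ 2 / 3) • Q - (2 * s ^ 3 / 27) • 1 := by
        simp only [sub_mul, mul_sub, smul_mul_assoc, mul_smul_comm, mul_one, one_mul]
        module
    _ = 0 := by
        rw [cube_eq_of_trace_eq_zero_fin_three htr, hs2, hs3]
        unfold nsq tr3
        module

theorem exists_eq_uni_of_mul_sub_smul_one_eq_zero {Q : Mat3} (hsymm : Q.IsSymm)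
    (htr : Q.trace = 0) {s : ℝ} (hs : s ≠ 0)
    (h : (Q - (2 * s / 3) • 1) * (Q - (-(s / 3)) • 1) = 0) :
    ∃ n, unitVec n ∧ Q = uni s n := by
  set B := Q - (-(s / 3)) • 1
  have hBB : B * B = s • B :=
    calc B * B = (Q - (2 * s / 3) • 1) * B + s • B := by
          simp only [B, sub_mul, mul_sub, smul_mul_assoc, mul_smul_comm, mul_one, one_mul]
          module
      _ = s • B := by rw [h, zero_add]
  have hPsymm : (s⁻¹ • B).IsSymm := (hsymm.sub (isSymm_one.smul _)).smul _
  have hidem : IsIdempotentElem (s⁻¹ • B) := by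
    rw [IsIdempotentElem, smul_mul_smul_comm, hBB, smul_smul, mul_assoc, inv_mul_cancel₀ hs,
      mul_one]
  have htrP : (s⁻¹ • B).trace = 1 := by
    rw [trace_smul, trace_sub, htr, trace_smul, trace_one, Fintype.card_fin, smul_eq_mul,
      smul_eq_mul]
    field_simp
    ring
  obtain ⟨n, hn, hPn⟩ := hPsymm.exists_eq_vecMulVec_of_isIdempotentElem hidem htrP
  refine ⟨n, hn, ?_⟩
  rw [uni, ← hPn, smul_sub, smul_smul, mul_inv_cancel₀ hs, one_smul, smul_smul]
  module

theorem stmt1 (Q : Mat3) (hQ : S0 Q) (hne : Q ≠ 0) :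
    6 * (tr3 Q) ^ 2 = (nsq Q) ^ 3 ↔ ∃ (s : ℝ) (n : Fin 3 → ℝ), unitVec n ∧ Q = uni s n := by
  obtain ⟨hsymm, htr⟩ := hQ
  constructor
  · intro h
    obtain ⟨s, hs, hfac⟩ := exists_mul_sub_smul_one_eq_zero_of_sq_tr3_eq hsymm htr hne h
    exact ⟨s, exists_eq_uni_of_mul_sub_smul_one_eq_zero hsymm htr hs hfac⟩
  · rintro ⟨s, n, hn, rfl⟩
    rw [nsq_uni s hn, tr3_uni s hn]
    ring

end
end

section
/- For every symmetric traceless real 3×3 matrix Q, the elementary inequality 0 ≤ |Q|³ − √6·tr Q³ ≤ ((3 − sgn(tr Q³))/2)·|Q|³ holds; in particular |Q|³ − √6·tr Q³ ≤ 2|Q|³, and if tr Q³ ≥ 0 then |Q|³ − √6·tr Q³ ≤ |Q|³. -/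
/-!
Diagonalise `Q`: with eigenvalues `a + b + c = 0` one has `tr Q² = a² + b² + c²` and
`tr Q³ = a³ + b³ + c³`, and substituting `c = -a - b` gives
`(a² + b² + c²)³ - 6 (a³ + b³ + c³)² = 2 ((a - b)(2a + b)(a + 2b))² ≥ 0`.
Hence `√6 |tr Q³| ≤ |Q|³`, and all four bounds follow by comparing `√6 tr Q³` with `±|Q|³`
according to the sign of `tr Q³`.
-/

open Matrix

noncomputable section

/-- Frobenius norm `|Q| = √(tr Q²)`. -/
def normQ (Q : Mat3) : ℝ := Real.sqrt (nsq Q)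

theorem Matrix.IsHermitian.trace_pow_eq_sum_eigenvalues_pow {𝕜 n : Type*} [RCLike 𝕜]
    [Fintype n] [DecidableEq n] {A : Matrix n n 𝕜} (hA : A.IsHermitian) (k : ℕ) :
    (A ^ k).trace = ∑ i, (hA.eigenvalues i : 𝕜) ^ k := by
  conv_lhs => rw [hA.spectral_theorem]
  rw [← map_pow, Unitary.conjStarAlgAut_apply, trace_mul_cycle, Unitary.coe_star_mul_self,
    one_mul, diagonal_pow, trace_diagonal]
  rfl

lemma six_mul_sum_cube_sq_le_sum_sq_cube {a b c : ℝ} (h : a + b + c = 0) :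
    6 * (a ^ 3 + b ^ 3 + c ^ 3) ^ 2 ≤ (a ^ 2 + b ^ 2 + c ^ 2) ^ 3 := by
  obtain rfl : c = -a - b := by linarith
  nlinarith [sq_nonneg ((a - b) * (2 * a + b) * (a + 2 * b))]

lemma six_mul_tr3_sq_le_nsq_cube {Q : Mat3} (hQ : S0 Q) : 6 * tr3 Q ^ 2 ≤ nsq Q ^ 3 := by
  have hherm : Q.IsHermitian := by
    rw [IsHermitian, conjTranspose_eq_transpose_of_trivial]; exact hQ.1
  have htr (k : ℕ) : (Q ^ k).trace = ∑ i, hherm.eigenvalues i ^ k :=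
    hherm.trace_pow_eq_sum_eigenvalues_pow k
  have hsum := hQ.2
  rw [← pow_one Q, htr] at hsum
  rw [tr3, nsq, ← pow_three', ← sq, htr, htr]
  simp only [Fin.sum_univ_three, pow_one] at hsum ⊢
  exact six_mul_sum_cube_sq_le_sum_sq_cube hsum

lemma sqrt_six_mul_abs_tr3_le_normQ_pow_three {Q : Mat3} (hQ : S0 Q) :
    Real.sqrt 6 * |tr3 Q| ≤ normQ Q ^ 3 := by
  have hkey := six_mul_tr3_sq_le_nsq_cube hQ
  have hnsq : 0 ≤ nsq Q := (Odd.pow_nonneg_iff (by decide)).1 (le_trans (by positivity) hkey)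
  rw [normQ, ← pow_le_pow_iff_left₀ (by positivity) (by positivity) two_ne_zero, mul_pow, sq_abs,
    Real.sq_sqrt (by norm_num), pow_right_comm, Real.sq_sqrt hnsq]
  exact hkey

lemma sub_mul_le_three_sub_sign_div_two_mul {c t N : ℝ} (hc : 0 ≤ c) (h : c * |t| ≤ N) :
    N - c * t ≤ (3 - Real.sign t) / 2 * N := by
  rcases lt_trichotomy t 0 with ht | rfl | ht
  · rw [abs_of_neg ht] at h
    rw [Real.sign_of_neg ht]
    linarith
  · rw [abs_zero, mul_zero] at h
    rw [Real.sign_zero]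
    linarith
  · have := mul_nonneg hc ht.le
    rw [Real.sign_of_pos ht]
    linarith

theorem stmt2 (Q : Mat3) (hQ : S0 Q) :
    0 ≤ (normQ Q) ^ 3 - Real.sqrt 6 * tr3 Q ∧
    (normQ Q) ^ 3 - Real.sqrt 6 * tr3 Q ≤ ((3 - Real.sign (tr3 Q)) / 2) * (normQ Q) ^ 3 ∧
    (normQ Q) ^ 3 - Real.sqrt 6 * tr3 Q ≤ 2 * (normQ Q) ^ 3 ∧
    (0 ≤ tr3 Q → (normQ Q) ^ 3 - Real.sqrt 6 * tr3 Q ≤ (normQ Q) ^ 3) := by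
  have hbound := sqrt_six_mul_abs_tr3_le_normQ_pow_three hQ
  have hsqrt6 : 0 ≤ Real.sqrt 6 := Real.sqrt_nonneg 6
  obtain ⟨hlower, hupper⟩ : -(normQ Q ^ 3) ≤ Real.sqrt 6 * tr3 Q ∧
      Real.sqrt 6 * tr3 Q ≤ normQ Q ^ 3 := by
    rwa [← abs_le, abs_mul, abs_of_nonneg hsqrt6]
  refine ⟨by linarith, sub_mul_le_three_sub_sign_div_two_mul hsqrt6 hbound, by linarith,
    fun ht => ?_⟩
  have := mul_nonneg hsqrt6 ht
  linarith
end
end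

section
/- For every ε₁ ∈ (0,1) and every symmetric traceless real 3×3 matrix Q with 1 − ε₁ ≤ |Q| ≤ 1 and 0 ≤ |Q|³ − √6·tr Q³ ≤ ε₁, the biaxiality parameter satisfies β²(Q) ≤ 2ε₁/(1 − ε₁)³. In particular β²(Q) → 0 as ε₁ → 0, uniformly over such Q. -/
open Matrix

noncomputable section

/-- The biaxiality parameter `β²(Q) = 1 − 6(tr Q³)²/|Q|⁶`. -/
def betaSq (Q : Mat3) : ℝ := 1 - 6 * (tr3 Q) ^ 2 / (nsq Q) ^ 3

/- With `a = n³ - x`, the numerator of `1 - x²/n⁶` is `a (2n³ - a) ≤ 2n³ a`. -/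
theorem one_sub_sq_div_pow_six_le {n x ε : ℝ} (hn : 0 < n)
    (haε : n ^ 3 - x ≤ ε) : 1 - x ^ 2 / n ^ 6 ≤ 2 * ε / n ^ 3 := by
  have hn3 : 0 < n ^ 3 := pow_pos hn 3
  have hsplit : 1 - x ^ 2 / n ^ 6 = (2 * n ^ 3 * (n ^ 3 - x) - (n ^ 3 - x) ^ 2) / (n ^ 3) ^ 2 := by
    field_simp
    ring
  calc 1 - x ^ 2 / n ^ 6 ≤ 2 * n ^ 3 * ε / (n ^ 3) ^ 2 := by
        rw [hsplit]
        gcongr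
        nlinarith [sq_nonneg (n ^ 3 - x)]
    _ = 2 * ε / n ^ 3 := by field_simp

theorem betaSq_eq_of_normQ_pos {Q : Mat3} (hQ : 0 < normQ Q) :
    betaSq Q = 1 - (Real.sqrt 6 * tr3 Q) ^ 2 / normQ Q ^ 6 := by
  have hnsq : normQ Q ^ 2 = nsq Q := Real.sq_sqrt (Real.sqrt_pos.mp hQ).le
  rw [betaSq, mul_pow, Real.sq_sqrt (by norm_num : (0 : ℝ) ≤ 6), ← hnsq, ← pow_mul]

theorem tendsto_two_mul_div_one_sub_pow_three :
    Filter.Tendsto (fun ε : ℝ => 2 * ε / (1 - ε) ^ 3) (nhdsWithin 0 (Set.Ioi 0)) (nhds 0) := by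
  have hcont : ContinuousAt (fun ε : ℝ => 2 * ε / (1 - ε) ^ 3) 0 :=
    ContinuousAt.div (by fun_prop) (by fun_prop) (by norm_num)
  simpa using hcont.tendsto.mono_left nhdsWithin_le_nhds

theorem stmt3 :
    (∀ ε₁ ∈ Set.Ioo (0 : ℝ) 1, ∀ Q : Mat3, S0 Q →
      1 - ε₁ ≤ normQ Q → normQ Q ≤ 1 →
      0 ≤ (normQ Q) ^ 3 - Real.sqrt 6 * tr3 Q →
      (normQ Q) ^ 3 - Real.sqrt 6 * tr3 Q ≤ ε₁ →
      betaSq Q ≤ 2 * ε₁ / (1 - ε₁) ^ 3) ∧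
    Filter.Tendsto (fun ε₁ : ℝ => 2 * ε₁ / (1 - ε₁) ^ 3)
      (nhdsWithin 0 (Set.Ioi 0)) (nhds 0) := by
  refine ⟨fun ε₁ ⟨hε₁, hε₁'⟩ Q _ hlo _ _ haε => ?_, tendsto_two_mul_div_one_sub_pow_three⟩
  have hpos : 0 < 1 - ε₁ := sub_pos.mpr hε₁'
  have hQ : 0 < normQ Q := hpos.trans_le hlo
  calc betaSq Q = 1 - (Real.sqrt 6 * tr3 Q) ^ 2 / normQ Q ^ 6 := betaSq_eq_of_normQ_pos hQ
    _ ≤ 2 * ε₁ / normQ Q ^ 3 := one_sub_sq_div_pow_six_le hQ haε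
    _ ≤ 2 * ε₁ / (1 - ε₁) ^ 3 := by gcongr
end
end

section
/- For every symmetric traceless real 3×3 matrix Q, the expression 1 + 3|Q|⁴ − 4√6·tr Q³ is nonnegative, with equality if and only if Q is uniaxial with |Q| = 1 and nonnegative scalar order parameter, i.e., Q = √(3/2)(n⊗n − I/3) for some unit vector n. -/
/-!
Write `p = |Q|²` and `q = tr Q³`. For a traceless `3 × 3` matrix, Cayley–Hamilton gives
`Q³ = (p/2) Q + (q/3) I`, hence `tr Q⁴ = p²/2`, and with `B = Q² - Q/√6 - (p/3) I` this yields the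
sum-of-squares identity `1 + 3p² - 4√6 q = 12 |B|² + (p - 1)²`. So the expression is nonnegative,
and it vanishes iff `|Q| = 1` and `Q² = Q/√6 + I/3`. The latter says exactly that
`P = √(2/3) Q + I/3` is a symmetric idempotent of trace `1`, i.e. `P = n ⊗ n` with `|n| = 1`.
-/

open Matrix

noncomputable section

namespace Matrix.IsSymm

variable {ι : Type*} [Fintype ι] {P : Matrix ι ι ℝ}

theorem trace_mul_self_nonneg (hP : P.IsSymm) : 0 ≤ (P * P).trace := by
  simpa [conjTranspose_eq_transpose_of_trivial, hP.eq] using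
    (posSemidef_conjTranspose_mul_self P).trace_nonneg

theorem trace_mul_self_eq_zero_iff_s7 (hP : P.IsSymm) : (P * P).trace = 0 ↔ P = 0 := by
  simpa [conjTranspose_eq_transpose_of_trivial, hP.eq] using
    trace_conjTranspose_mul_self_eq_zero_iff (A := P)

theorem apply_self_eq_dotProduct (hP : P.IsSymm) (hPP : IsIdempotentElem P) (k : ι) :
    P k k = P k ⬝ᵥ P k := by
  conv_lhs => rw [← hPP.eq]
  simp only [mul_apply, dotProduct, hP.apply]

theorem vecMulVec_row_eq_smul (hP : P.IsSymm) (hPP : IsIdempotentElem P) (htr : P.trace = 1)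
    (k : ι) : vecMulVec (P k) (P k) = P k k • P := by
  set a := P k k
  set M := vecMulVec (P k) (P k) - a • P
  have hM : M.IsSymm := IsSymm.sub (transpose_vecMulVec (P k) (P k)) (hP.smul a)
  have hvv : P k ⬝ᵥ P k = a := (hP.apply_self_eq_dotProduct hPP k).symm
  have hvP : P k ᵥ* P = P k := by rw [← mul_apply_eq_vecMul, hPP.eq]
  have hPv : P *ᵥ P k = P k := by rw [← vecMul_transpose, hP.eq, hvP]
  have hMM : M * M = -a • M := by
    simp only [M, sub_mul, mul_sub, smul_mul_assoc, mul_smul_comm, vecMulVec_mul_vecMulVec, hvv,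
      vecMulVec_smul]
    simp only [vecMulVec_mul, mul_vecMulVec, hvP, hPv, hPP.eq]
    module
  have htrM : M.trace = 0 := by
    simp [M, trace_sub, trace_smul, htr, hvv]
  rw [← sub_eq_zero, ← hM.trace_mul_self_eq_zero_iff_s7, hMM, trace_smul, htrM, smul_zero]

theorem exists_eq_vecMulVec_self (hP : P.IsSymm) (hPP : IsIdempotentElem P)
    (htr : P.trace = 1) : ∃ n : ι → ℝ, n ⬝ᵥ n = 1 ∧ P = vecMulVec n n := by
  obtain ⟨k, -, hk⟩ : ∃ k ∈ Finset.univ, (0 : ℝ) < P k k :=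
    Finset.exists_lt_of_sum_lt (by
      rw [Finset.sum_const_zero]; exact (zero_lt_one.trans_eq htr.symm : (0 : ℝ) < P.trace))
  have hs : (√(P k k))⁻¹ * (√(P k k))⁻¹ * P k k = 1 := by
    rw [← mul_inv, Real.mul_self_sqrt hk.le, inv_mul_cancel₀ hk.ne']
  refine ⟨(√(P k k))⁻¹ • P k, ?_, ?_⟩
  · rw [smul_dotProduct, dotProduct_smul, ← hP.apply_self_eq_dotProduct hPP, smul_eq_mul,
      smul_eq_mul, ← mul_assoc, hs]
  · rw [smul_vecMulVec, vecMulVec_smul, hP.vecMulVec_row_eq_smul hPP htr, smul_smul, smul_smul, hs,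
      one_smul]

end Matrix.IsSymm

namespace Matrix

variable {K : Type*} [Field K] [CharZero K] {Q : Matrix (Fin 3) (Fin 3) K}

theorem cube_eq_of_trace_eq_zero (hQ : Q.trace = 0) :
    Q * Q * Q = ((Q * Q).trace / 2) • Q + ((Q * Q * Q).trace / 3) • 1 := by
  have h22 : Q 2 2 = -(Q 0 0 + Q 1 1) := by
    rw [trace_fin_three] at hQ
    linear_combination hQ
  ext i j
  fin_cases i <;> fin_cases j <;>
    simp [trace_fin_three, mul_apply, Fin.sum_univ_three, h22] <;> ring

theorem trace_pow_four_of_trace_eq_zero (hQ : Q.trace = 0) :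
    (Q ^ 4).trace = (Q * Q).trace ^ 2 / 2 := by
  rw [pow_succ, pow_three', cube_eq_of_trace_eq_zero hQ, add_mul, smul_mul_assoc, smul_mul_assoc,
    one_mul, trace_add, trace_smul, trace_smul, hQ, smul_eq_mul, smul_zero, add_zero]
  ring

theorem trace_mul_self_sq_sub_smul_sub_smul_one (hQ : Q.trace = 0) (t : K) :
    ((Q * Q - t • Q - ((Q * Q).trace / 3) • 1) * (Q * Q - t • Q - ((Q * Q).trace / 3) • 1)).trace
      = (Q * Q).trace ^ 2 / 6 - 2 * t * (Q * Q * Q).trace + t ^ 2 * (Q * Q).trace := by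
  have h4 : (Q * Q * Q * Q).trace = (Q * Q).trace ^ 2 / 2 := by
    rw [← trace_pow_four_of_trace_eq_zero hQ, pow_succ, pow_three']
  simp only [sub_mul, mul_sub, smul_mul_assoc, mul_smul_comm, one_mul, mul_one, ← mul_assoc,
    trace_sub, trace_smul, trace_one, h4, hQ, Fintype.card_fin, smul_eq_mul]
  ring

end Matrix

lemma sqrt_six_mul_self : √6 * √6 = 6 := Real.mul_self_sqrt (by norm_num)

lemma sqrt_three_div_two : √(3 / 2) = √6 / 2 := by
  rw [show (3 / 2 : ℝ) = 6 / 2 ^ 2 by norm_num, Real.sqrt_div' _ (by norm_num : (0 : ℝ) ≤ 2 ^ 2),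
    Real.sqrt_sq (by norm_num)]

/-- The matrix `B` of the sum-of-squares identity. -/
def uniaxialDefect (Q : Mat3) : Mat3 := Q * Q - (√6 / 6) • Q - (nsq Q / 3) • 1

lemma isSymm_uniaxialDefect {Q : Mat3} (hQ : Q.IsSymm) : (uniaxialDefect Q).IsSymm :=
  ((hQ.eq ▸ isSymm_mul_transpose_self Q :).sub (hQ.smul _)).sub (isSymm_one.smul _)

theorem quartic_eq_nsq_uniaxialDefect_add_sq {Q : Mat3} (hQ : Q.trace = 0) :
    1 + 3 * nsq Q ^ 2 - 4 * √6 * tr3 Q = 12 * nsq (uniaxialDefect Q) + (nsq Q - 1) ^ 2 := by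
  simp only [nsq, tr3, uniaxialDefect, trace_mul_self_sq_sub_smul_sub_smul_one hQ]
  linear_combination (-(Q * Q).trace / 3) * sqrt_six_mul_self

theorem uniaxialDefect_eq_zero_and_nsq_eq_one_iff {Q : Mat3} (hQ : Q.trace = 0) :
    uniaxialDefect Q = 0 ∧ nsq Q = 1 ↔ Q * Q = (√6 / 6) • Q + (1 / 3 : ℝ) • 1 := by
  constructor
  · rintro ⟨h0, h1⟩
    rwa [uniaxialDefect, h1, sub_sub, sub_eq_zero] at h0
  · intro h
    have h1 : nsq Q = 1 := by
      rw [nsq, h, trace_add, trace_smul, trace_smul, hQ, trace_one]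
      norm_num
    refine ⟨?_, h1⟩
    rw [uniaxialDefect, h1, h]
    module

theorem exists_unitVec_eq_uni_iff {Q : Mat3} (hs : Q.IsSymm) (ht : Q.trace = 0) :
    (∃ n, unitVec n ∧ Q = uni √(3 / 2) n) ↔ Q * Q = (√6 / 6) • Q + (1 / 3 : ℝ) • 1 := by
  rw [sqrt_three_div_two]
  constructor
  · rintro ⟨n, hn, rfl⟩
    have hN : vecMulVec n n * vecMulVec n n = vecMulVec n n := by
      rw [vecMulVec_mul_vecMulVec, show n ⬝ᵥ n = 1 by simpa [unitVec, dotProduct, sq] using hn,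
        one_smul]
    simp only [uni, sub_mul, mul_sub, smul_mul_assoc, mul_smul_comm, smul_sub, hN, one_mul,
      mul_one, smul_smul]
    linear_combination (norm := module) (1 / 18 : ℝ) • sqrt_six_mul_self • (1 : Mat3)
  · intro h
    set P : Mat3 := (√6 / 3) • Q + (1 / 3 : ℝ) • 1
    have hPs : P.IsSymm := (hs.smul _).add (isSymm_one.smul _)
    have hPP : IsIdempotentElem P := by
      simp only [IsIdempotentElem, P, add_mul, mul_add, smul_mul_assoc, mul_smul_comm, one_mul,
        mul_one, h]
      linear_combination (norm := module)
        (1 / 9 : ℝ) • sqrt_six_mul_self • ((√6 / 6) • Q + (1 / 3 : ℝ) • 1)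
    have hPt : P.trace = 1 := by
      rw [trace_add, trace_smul, trace_smul, ht, trace_one]
      norm_num
    obtain ⟨n, hn, hPn⟩ := hPs.exists_eq_vecMulVec_self hPP hPt
    refine ⟨n, by simpa [unitVec, dotProduct, sq] using hn, ?_⟩
    rw [uni, ← hPn, add_sub_cancel_right, smul_smul]
    linear_combination (norm := module) (-1 / 6 : ℝ) • sqrt_six_mul_self • Q

theorem stmt7 (Q : Mat3) (hQ : S0 Q) :
    0 ≤ 1 + 3 * (nsq Q) ^ 2 - 4 * Real.sqrt 6 * tr3 Q ∧
    (1 + 3 * (nsq Q) ^ 2 - 4 * Real.sqrt 6 * tr3 Q = 0 ↔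
      ∃ n : Fin 3 → ℝ, unitVec n ∧ Q = uni (Real.sqrt (3 / 2)) n) := by
  obtain ⟨hs, ht⟩ := hQ
  have hB := isSymm_uniaxialDefect hs
  have hB0 : 0 ≤ nsq (uniaxialDefect Q) := hB.trace_mul_self_nonneg
  have hB1 : nsq (uniaxialDefect Q) = 0 ↔ uniaxialDefect Q = 0 := hB.trace_mul_self_eq_zero_iff_s7
  rw [quartic_eq_nsq_uniaxialDefect_add_sq ht, exists_unitVec_eq_uni_iff hs ht,
    ← uniaxialDefect_eq_zero_and_nsq_eq_one_iff ht, ← hB1,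
    add_eq_zero_iff_of_nonneg (by positivity) (sq_nonneg _), mul_eq_zero, sq_eq_zero_iff,
    sub_eq_zero]
  exact ⟨by positivity, by simp⟩
end
end

section
/- Let h : [0,∞) → ℝ solve h'' + (2/r)h' − 6h/r² = h³ − h with h(0) = 0 and h(r) → 1 as r → ∞, and suppose h is monotonically increasing. Then the map H(x) = √(3/2)·h(|x|)·(x⊗x/|x|² − I/3), extended by H(0)=0, is a classical solution on ℝ³ of the Ginzburg–Landau system ΔQ = (|Q|² − 1)Q with values in symmetric traceless 3×3 matrices, is uniaxial with nonnegative scalar order parameter, and satisfies H(0) = 0. -/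
open Matrix

noncomputable section

open scoped Classical

abbrev E3 := EuclideanSpace ℝ (Fin 3)

/-- The Laplacian of a scalar function on `ℝ³`:  `Δu = Σᵢ ∂²u/∂xᵢ²`. -/
def lap (u : E3 → ℝ) (x : E3) : ℝ :=
  ∑ i : Fin 3, iteratedFDeriv ℝ 2 u x ![EuclideanSpace.single i 1, EuclideanSpace.single i 1]

/-- The radial-hedgehog profile `H(x) = √(3/2) h(|x|)(x⊗x/|x|² − I/3)`. -/
def hedgehog (h : ℝ → ℝ) (x : E3) : Mat3 :=
  if x = 0 then 0 else uni (Real.sqrt (3 / 2) * h ‖x‖) (fun i => x i / ‖x‖)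


open Filter Topology Set
open scoped ContDiff


lemma iteratedDeriv_add'' {f g : ℝ → ℝ} (hf : ContDiff ℝ ∞ f)
    (hg : ContDiff ℝ ∞ g) (n : ℕ) (x : ℝ) :
    iteratedDeriv n (fun r => f r + g r) x = iteratedDeriv n f x + iteratedDeriv n g x := by
  have := iteratedFDeriv_add_apply (x := x) (i := n) (f := f) (g := g)
    (hf.contDiffAt.of_le (by exact_mod_cast ((mod_cast le_top) : (n:ℕ∞) ≤ ⊤))) (hg.contDiffAt.of_le (by exact_mod_cast ((mod_cast le_top) : (n:ℕ∞) ≤ ⊤)))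
  simp only [iteratedDeriv_eq_iteratedFDeriv]
  rw [show (fun r => f r + g r) = f + g from rfl, this]
  rfl

lemma iteratedDeriv_const_mul'' {f : ℝ → ℝ} (hf : ContDiff ℝ ∞ f) (c : ℝ) (n : ℕ) (x : ℝ) :
    iteratedDeriv n (fun r => c * f r) x = c * iteratedDeriv n f x := by
  have := iteratedFDeriv_const_smul_apply (x := x) (i := n) (f := f) (a := c)
    (hf.contDiffAt.of_le (by exact_mod_cast ((mod_cast le_top) : (n:ℕ∞) ≤ ⊤)))
  simp only [iteratedDeriv_eq_iteratedFDeriv]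
  rw [show (fun r => c * f r) = c • f from rfl, this]
  rfl

lemma iter_id_mul {g : ℝ → ℝ} (hg : ContDiff ℝ ∞ g) :
    ∀ (n : ℕ) (x : ℝ), iteratedDeriv (n+1) (fun r => r * g r) x
      = (n+1 : ℝ) * iteratedDeriv n g x + x * iteratedDeriv (n+1) g x := by
  intro n
  induction n generalizing g with
  | zero =>
    intro x
    have hd : ∀ y : ℝ, HasDerivAt (fun r => r * g r) (g y + y * deriv g y) y := by
      intro y
      have := (hasDerivAt_id y).mul ((hg.differentiable (by simp)) y).hasDerivAt
      exact this.congr_deriv (by simp)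
    simp only [zero_add, iteratedDeriv_one, iteratedDeriv_zero]
    rw [(hd x).deriv]
    push_cast; ring
  | succ n ih =>
    intro x
    have hg' : ContDiff ℝ ∞ (deriv g) := (contDiff_infty_iff_deriv.mp hg).2
    have hder : deriv (fun r => r * g r) = fun r => g r + r * deriv g r := by
      funext y
      have := (hasDerivAt_id y).mul ((hg.differentiable (by simp)) y).hasDerivAt
      exact (this.congr_deriv (by simp)).deriv
    rw [iteratedDeriv_succ' (n := n+1), hder,
      iteratedDeriv_add'' hg (by exact (contDiff_id.mul hg') : ContDiff ℝ ∞ (fun r => r * deriv g r)),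
      ih hg' x, ← iteratedDeriv_succ' (n := n), ← iteratedDeriv_succ' (n := n+1)]
    push_cast; ring

lemma tendsto_div_pow {F : ℝ → ℝ} (hF : ContDiff ℝ ∞ F) :
    ∀ (n : ℕ), (∀ k < n, iteratedDeriv k F 0 = 0) →
    Tendsto (fun r => F r / r ^ n) (𝓝[>] (0:ℝ)) (𝓝 (iteratedDeriv n F 0 / n.factorial)) := by
  intro n
  induction n generalizing F with
  | zero =>
    intro _
    simpa using ((hF.continuous.tendsto 0).mono_left nhdsWithin_le_nhds)
  | succ n ih =>
    intro hvan
    have hF' : ContDiff ℝ ∞ (deriv F) := (contDiff_infty_iff_deriv.mp hF).2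
    have key := ih hF' (fun k hk => by
      rw [← iteratedDeriv_succ']; exact hvan (k+1) (by omega))
    apply HasDerivAt.lhopital_zero_nhdsGT (f' := deriv F) (g' := fun x => (n+1 : ℝ) * x ^ n)
    · filter_upwards with x
      exact ((hF.differentiable (by simp)) x).hasDerivAt
    · filter_upwards with x
      simpa using (hasDerivAt_pow (n+1) x)
    · filter_upwards [self_mem_nhdsWithin] with x hx
      have : (0:ℝ) < x := hx
      positivity
    · have : Tendsto F (𝓝 (0:ℝ)) (𝓝 (F 0)) := hF.continuous.tendsto 0
      rw [show F 0 = 0 from by simpa using hvan 0 (by omega)] at this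
      exact this.mono_left nhdsWithin_le_nhds
    · have : Tendsto (fun x : ℝ => x ^ (n+1)) (𝓝 0) (𝓝 (0 ^ (n+1) : ℝ)) := (continuous_pow (n+1)).tendsto 0
      simpa using this.mono_left nhdsWithin_le_nhds
    · have h2 : Tendsto (fun x => (deriv F x / x ^ n) / (n+1 : ℝ)) (𝓝[>] (0:ℝ))
          (𝓝 (iteratedDeriv n (deriv F) 0 / n.factorial / (n+1:ℝ))) := key.div_const _
      have heq : ∀ x : ℝ, deriv F x / ((n+1:ℝ) * x ^ n) = deriv F x / x ^ n / (n+1:ℝ) := by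
        intro x; rw [div_div]; ring_nf
      rw [show iteratedDeriv n (deriv F) 0 / n.factorial / (n+1:ℝ)
          = iteratedDeriv (n+1) F 0 / (n+1).factorial from by
        rw [← iteratedDeriv_succ', Nat.factorial_succ]; push_cast; rw [div_div]; ring_nf] at h2
      simpa only [heq] using h2

lemma vanish_on_Ici {F : ℝ → ℝ} (hF : ContDiff ℝ ∞ F)
    (hz : ∀ r : ℝ, 0 ≤ r → F r = 0) : ∀ (n : ℕ) (r : ℝ), 0 ≤ r → iteratedDeriv n F r = 0 := by
  intro n
  induction n with
  | zero => simpa using hz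
  | succ n ih =>
    intro r hr
    have hG : ContDiff ℝ ∞ (iteratedDeriv n F) := by
      rw [iteratedDeriv_eq_iterate]; exact hF.iterate_deriv n
    have hGd : HasDerivAt (iteratedDeriv n F) (deriv (iteratedDeriv n F) r) r :=
      ((hG.differentiable (by simp)) r).hasDerivAt
    rw [iteratedDeriv_succ]
    rcases lt_or_eq_of_le hr with hr' | hr'
    · -- r > 0 : eventually zero
      have : (iteratedDeriv n F) =ᶠ[𝓝 r] (fun _ => 0) := by
        filter_upwards [Ioi_mem_nhds hr'] with y hy
        exact ih y (le_of_lt hy)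
      rw [this.deriv_eq]; simp
    · -- r = 0 : slope argument
      subst hr'
      have hslope := hasDerivAt_iff_tendsto_slope.mp hGd
      have hsub : 𝓝[>] (0:ℝ) ≤ 𝓝[≠] (0:ℝ) := nhdsWithin_mono _ (fun x hx => ne_of_gt hx)
      have h1 : Tendsto (slope (iteratedDeriv n F) 0) (𝓝[>] (0:ℝ)) (𝓝 (deriv (iteratedDeriv n F) 0)) :=
        hslope.mono_left hsub
      have h2 : Tendsto (slope (iteratedDeriv n F) 0) (𝓝[>] (0:ℝ)) (𝓝 0) := by
        have : ∀ x ∈ Ioi (0:ℝ), slope (iteratedDeriv n F) 0 x = 0 := by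
          intro x hx
          rw [slope_def_field, ih x (le_of_lt hx), ih 0 le_rfl]
          simp
        exact tendsto_const_nhds.congr' (by filter_upwards [self_mem_nhdsWithin] with x hx; exact (this x hx).symm)
      exact tendsto_nhds_unique h1 h2


lemma iteratedDeriv_sub'' {f g : ℝ → ℝ} (hf : ContDiff ℝ ∞ f)
    (hg : ContDiff ℝ ∞ g) (n : ℕ) (x : ℝ) :
    iteratedDeriv n (fun r => f r - g r) x = iteratedDeriv n f x - iteratedDeriv n g x := by
  have : (fun r => f r - g r) = fun r => f r + (-1 : ℝ) * g r := by funext r; ring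
  rw [this, iteratedDeriv_add'' hf (contDiff_const.mul hg), iteratedDeriv_const_mul'' hg]
  ring

section PartTwo

variable {h : ℝ → ℝ}

lemma h_odd_derivs (hsm : ContDiff ℝ ∞ h)
    (hODE : ∀ r : ℝ, 0 < r →
      deriv (deriv h) r + (2 / r) * deriv h r - 6 * h r / r ^ 2 = (h r) ^ 3 - h r)
    (h0 : h 0 = 0) :
    deriv h 0 = 0 ∧ iteratedDeriv 3 h 0 = 0 ∧ iteratedDeriv 5 h 0 = 0 := by
  have hdiff : Differentiable ℝ h := hsm.differentiable (by simp)
  have hd1 : ContDiff ℝ ∞ (deriv h) := (contDiff_infty_iff_deriv.mp hsm).2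
  have hd2 : ContDiff ℝ ∞ (deriv (deriv h)) := (contDiff_infty_iff_deriv.mp hd1).2
  have hd3 : ContDiff ℝ ∞ (deriv (deriv (deriv h))) := (contDiff_infty_iff_deriv.mp hd2).2
  set k : ℝ → ℝ := fun r => (h r)^3 - h r with hk
  have hksm : ContDiff ℝ ∞ k := (hsm.pow 3).sub hsm
  set u : ℝ → ℝ := fun r => deriv (deriv h) r - k r with hu
  have husm : ContDiff ℝ ∞ u := hd2.sub hksm
  set v : ℝ → ℝ := fun r => 2 * deriv h r with hv
  have hvsm : ContDiff ℝ ∞ v := contDiff_const.mul hd1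
  set w : ℝ → ℝ := fun r => -6 * h r with hw
  have hwsm : ContDiff ℝ ∞ w := contDiff_const.mul hsm
  set F : ℝ → ℝ := fun r => (r * (r * u r) + r * v r) + w r with hF
  have hFsm : ContDiff ℝ ∞ F :=
    ((contDiff_id.mul (contDiff_id.mul husm)).add (contDiff_id.mul hvsm)).add hwsm
  have hF0 : ∀ r : ℝ, 0 ≤ r → F r = 0 := by
    intro r hr
    rcases eq_or_lt_of_le hr with hr' | hr'
    · simp [hF, ← hr', hw, h0]
    · have := hODE r hr'
      have hrne : r ≠ 0 := ne_of_gt hr'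
      field_simp at this
      simp only [hF, hu, hv, hw, hk]
      nlinarith [this]
  have hvan := vanish_on_Ici hFsm hF0
  -- compute iteratedDeriv n F 0
  have hFn : ∀ n : ℕ, iteratedDeriv (n+2) F 0 =
      (((n:ℝ)+1+1) * (((n:ℝ)+1) * iteratedDeriv n u 0)
        + ((n:ℝ)+1+1) * iteratedDeriv (n+1) v 0) + iteratedDeriv (n+2) w 0 := by
    intro n
    have e1 : iteratedDeriv (n+2) F 0
        = iteratedDeriv (n+2) (fun r => r * (r * u r) + r * v r) 0 + iteratedDeriv (n+2) w 0 :=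
      iteratedDeriv_add'' ((contDiff_id.mul (contDiff_id.mul husm)).add (contDiff_id.mul hvsm)) hwsm _ _
    have e2 : iteratedDeriv (n+2) (fun r => r * (r * u r) + r * v r) 0
        = iteratedDeriv (n+2) (fun r => r * (r * u r)) 0 + iteratedDeriv (n+2) (fun r => r * v r) 0 :=
      iteratedDeriv_add'' (contDiff_id.mul (contDiff_id.mul husm)) (contDiff_id.mul hvsm) _ _
    have e3 : iteratedDeriv (n+2) (fun r => r * (r * u r)) 0
        = ((n:ℝ)+1+1) * iteratedDeriv (n+1) (fun r => r * u r) 0 := by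
      have := iter_id_mul (contDiff_id.mul husm) (n+1) 0
      simpa using this
    have e4 : iteratedDeriv (n+1) (fun r => r * u r) 0 = ((n:ℝ)+1) * iteratedDeriv n u 0 := by
      have := iter_id_mul husm n 0
      simpa using this
    have e5 : iteratedDeriv (n+2) (fun r => r * v r) 0 = ((n:ℝ)+1+1) * iteratedDeriv (n+1) v 0 := by
      have := iter_id_mul hvsm (n+1) 0
      simpa using this
    rw [e1, e2, e3, e4, e5]
  -- n = 1 : deriv h 0 = 0
  have hF1 : iteratedDeriv 1 F 0 = 0 := hvan 1 0 le_rfl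
  have hstep1 : deriv h 0 = 0 := by
    have e1 : iteratedDeriv 1 F 0
        = iteratedDeriv 1 (fun r => r * (r * u r) + r * v r) 0 + iteratedDeriv 1 w 0 :=
      iteratedDeriv_add'' ((contDiff_id.mul (contDiff_id.mul husm)).add (contDiff_id.mul hvsm)) hwsm _ _
    have e2 : iteratedDeriv 1 (fun r => r * (r * u r) + r * v r) 0
        = iteratedDeriv 1 (fun r => r * (r * u r)) 0 + iteratedDeriv 1 (fun r => r * v r) 0 :=
      iteratedDeriv_add'' (contDiff_id.mul (contDiff_id.mul husm)) (contDiff_id.mul hvsm) _ _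
    have e3 : iteratedDeriv 1 (fun r => r * (r * u r)) 0 = 0 := by
      have := iter_id_mul (contDiff_id.mul husm) 0 0
      simpa using this
    have e4 : iteratedDeriv 1 (fun r => r * v r) 0 = (1:ℝ) * iteratedDeriv 0 v 0 := by
      have := iter_id_mul hvsm 0 0
      simpa using this
    have e5 : iteratedDeriv 1 w 0 = -6 * deriv h 0 := by
      rw [iteratedDeriv_one, hw]
      have : ∀ r : ℝ, HasDerivAt w (-6 * deriv h r) r := fun r =>
        ((hdiff r).hasDerivAt).const_mul (-6)
      exact (this 0).deriv
    rw [e1, e2, e3, e4] at hF1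
    simp only [iteratedDeriv_zero, hv] at hF1
    rw [e5] at hF1
    linarith [hF1]
  -- conversions
  have conv1 : iteratedDeriv 1 h = deriv h := iteratedDeriv_one
  have conv2 : ∀ n : ℕ, iteratedDeriv n (deriv (deriv h)) 0 = iteratedDeriv (n+2) h 0 := by
    intro n
    rw [iteratedDeriv_succ' (n := n+1), iteratedDeriv_succ' (n := n)]
  have conv3 : iteratedDeriv 3 h 0 = deriv (deriv (deriv h)) 0 := by
    rw [show (3:ℕ) = 2+1 from rfl, iteratedDeriv_succ', iteratedDeriv_succ', iteratedDeriv_one]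
  -- derivative formulas for k
  have hk1 : deriv k = fun r => 3*(h r)^2*deriv h r - deriv h r := by
    funext r
    have : HasDerivAt k ((3:ℕ) * (h r)^(3-1) * deriv h r - deriv h r) r :=
      (((hdiff r).hasDerivAt.pow 3)).sub (hdiff r).hasDerivAt
    rw [this.deriv]; norm_num
  have hdk : deriv k 0 = 0 := by
    rw [hk1]; simp [h0, hstep1]
  -- n = 3
  have hstep3 : iteratedDeriv 3 h 0 = 0 := by
    have h3 := hvan 3 0 le_rfl
    have := hFn 1
    rw [show (1:ℕ)+2 = 3 from rfl] at this
    rw [this] at h3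
    have eu : iteratedDeriv 1 u 0 = iteratedDeriv 3 h 0 - deriv k 0 := by
      rw [hu, iteratedDeriv_sub'' hd2 hksm, conv2, iteratedDeriv_one]
    have ev : iteratedDeriv 2 v 0 = 2 * iteratedDeriv 3 h 0 := by
      rw [hv, iteratedDeriv_const_mul'' hd1, iteratedDeriv_succ' (n := 2)]
    have ew : iteratedDeriv 3 w 0 = -6 * iteratedDeriv 3 h 0 := by
      rw [hw, iteratedDeriv_const_mul'' hsm]
    rw [eu, ev, ew, hdk] at h3
    push_cast at h3
    linarith
  -- second and third derivative of k
  have hdiff1 : Differentiable ℝ (deriv h) := hd1.differentiable (by simp)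
  have hdiff2 : Differentiable ℝ (deriv (deriv h)) := hd2.differentiable (by simp)
  have hk2 : deriv (deriv k) = fun r =>
      (6*h r*(deriv h r)^2 + 3*(h r)^2*deriv (deriv h) r) - deriv (deriv h) r := by
    rw [hk1]
    funext r
    have h1 : HasDerivAt (fun r => 3*(h r)^2) (3*((2:ℕ)*(h r)^(2-1)*deriv h r)) r :=
      ((hdiff r).hasDerivAt.pow 2).const_mul 3
    have h2 : HasDerivAt (fun r => 3*(h r)^2*deriv h r)
        (3*((2:ℕ)*(h r)^(2-1)*deriv h r) * deriv h r + 3*(h r)^2 * deriv (deriv h) r) r :=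
      h1.mul (hdiff1 r).hasDerivAt
    have h3 : HasDerivAt (fun r => 3*(h r)^2*deriv h r - deriv h r)
        ((3*((2:ℕ)*(h r)^(2-1)*deriv h r) * deriv h r + 3*(h r)^2 * deriv (deriv h) r)
          - deriv (deriv h) r) r := h2.sub (hdiff1 r).hasDerivAt
    rw [h3.deriv]; norm_num; ring
  have hk3 : deriv (deriv (deriv k)) 0 = 0 := by
    rw [hk2]
    have h1 : HasDerivAt (fun r => 6*h r*(deriv h r)^2)
        (6*deriv h 0*(deriv h 0)^2 + 6*h 0*((2:ℕ)*(deriv h 0)^(2-1)*deriv (deriv h) 0)) 0 := by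
      exact (((hdiff 0).hasDerivAt.const_mul 6).mul ((hdiff1 0).hasDerivAt.pow 2))
    have h2 : HasDerivAt (fun r => 3*(h r)^2*deriv (deriv h) r)
        (3*((2:ℕ)*(h 0)^(2-1)*deriv h 0) * deriv (deriv h) 0
          + 3*(h 0)^2 * deriv (deriv (deriv h)) 0) 0 :=
      (((hdiff 0).hasDerivAt.pow 2).const_mul 3).mul (hdiff2 0).hasDerivAt
    have h4 : HasDerivAt (fun r => (6*h r*(deriv h r)^2 + 3*(h r)^2*deriv (deriv h) r)
          - deriv (deriv h) r)
        ((6*deriv h 0*(deriv h 0)^2 + 6*h 0*((2:ℕ)*(deriv h 0)^(2-1)*deriv (deriv h) 0)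
          + (3*((2:ℕ)*(h 0)^(2-1)*deriv h 0) * deriv (deriv h) 0
          + 3*(h 0)^2 * deriv (deriv (deriv h)) 0)) - deriv (deriv (deriv h)) 0) 0 :=
      (h1.add h2).sub (hdiff2 0).hasDerivAt
    rw [h4.deriv, h0, hstep1, ← conv3, hstep3]
    ring
  -- n = 5
  have hstep5 : iteratedDeriv 5 h 0 = 0 := by
    have h5 := hvan 5 0 le_rfl
    have := hFn 3
    rw [show (3:ℕ)+2 = 5 from rfl] at this
    rw [this] at h5
    have convk3 : iteratedDeriv 3 k 0 = deriv (deriv (deriv k)) 0 := by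
      rw [show (3:ℕ) = 2+1 from rfl, iteratedDeriv_succ', iteratedDeriv_succ', iteratedDeriv_one]
    have eu : iteratedDeriv 3 u 0 = iteratedDeriv 5 h 0 := by
      rw [hu, iteratedDeriv_sub'' hd2 hksm, conv2, convk3, hk3, sub_zero]
    have ev : iteratedDeriv 4 v 0 = 2 * iteratedDeriv 5 h 0 := by
      rw [hv, iteratedDeriv_const_mul'' hd1, iteratedDeriv_succ' (n := 4)]
    have ew : iteratedDeriv 5 w 0 = -6 * iteratedDeriv 5 h 0 := by
      rw [hw, iteratedDeriv_const_mul'' hsm]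
    rw [eu, ev, ew] at h5
    push_cast at h5
    linarith
  exact ⟨hstep1, hstep3, hstep5⟩

end PartTwo

section PartThree

lemma iterderiv_const' (c : ℝ) (n : ℕ) (x : ℝ) :
    iteratedDeriv n (fun _ : ℝ => c) x = if n = 0 then c else 0 := by
  induction n generalizing c x with
  | zero => simp
  | succ n ih =>
    rw [iteratedDeriv_succ']
    simp only [deriv_const']
    rw [ih 0]
    simp

lemma iterderiv_monomial (m : ℕ) : ∀ (c : ℝ) (n : ℕ),
    iteratedDeriv n (fun r : ℝ => c * r ^ m) 0 = if n = m then c * m.factorial else 0 := by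
  induction m with
  | zero =>
    intro c n
    have : (fun r : ℝ => c * r ^ 0) = fun _ : ℝ => c := by funext r; simp
    rw [this, iterderiv_const']
    simp [eq_comm]
  | succ m ih =>
    intro c n
    cases n with
    | zero => simp
    | succ n =>
      rw [iteratedDeriv_succ']
      have hder : deriv (fun r : ℝ => c * r ^ (m+1)) = fun r : ℝ => (c * (m+1)) * r ^ m := by
        funext r
        have := (hasDerivAt_pow (m+1) r).const_mul c
        rw [this.deriv]
        push_cast [Nat.add_sub_cancel]; ring
      rw [hder, ih (c * (m+1)) n]
      rcases eq_or_ne n m with rfl | hne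
      · simp [Nat.factorial_succ]; push_cast; ring
      · have : ¬ (n + 1 = m + 1) := by omega
        simp [hne, this]

variable {h : ℝ → ℝ}

def betC (h : ℝ → ℝ) : ℝ := iteratedDeriv 2 h 0 / 2
def gamC (h : ℝ → ℝ) : ℝ := iteratedDeriv 4 h 0 / 24
def epsC (h : ℝ → ℝ) : ℝ := iteratedDeriv 6 h 0 / 720

def phiF (h : ℝ → ℝ) : ℝ → ℝ := fun t =>
  if 0 < t then h (Real.sqrt t) / t else betC h + gamC h * t + epsC h * t ^ 2

def psiF (h : ℝ → ℝ) : ℝ → ℝ := fun t =>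
  if 0 < t then (Real.sqrt t * deriv h (Real.sqrt t) - 2 * h (Real.sqrt t)) / (2 * t ^ 2)
  else gamC h + 2 * epsC h * t

def chiF (h : ℝ → ℝ) : ℝ → ℝ := fun t =>
  if 0 < t then
    ((Real.sqrt t) ^ 2 * deriv (deriv h) (Real.sqrt t) - 5 * Real.sqrt t * deriv h (Real.sqrt t)
      + 8 * h (Real.sqrt t)) / (4 * t ^ 3)
  else 2 * epsC h

lemma iter_rd1 (hsm : ContDiff ℝ ∞ h) (k : ℕ) :
    iteratedDeriv k (fun r => r * deriv h r) 0 = (k : ℝ) * iteratedDeriv k h 0 := by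
  have hd1 : ContDiff ℝ ∞ (deriv h) := (contDiff_infty_iff_deriv.mp hsm).2
  cases k with
  | zero => simp
  | succ k =>
    have := iter_id_mul hd1 k 0
    rw [this]
    rw [show iteratedDeriv k (deriv h) 0 = iteratedDeriv (k+1) h 0 from by rw [iteratedDeriv_succ']]
    push_cast; ring

lemma iter_rrd2 (hsm : ContDiff ℝ ∞ h) (k : ℕ) :
    iteratedDeriv k (fun r => r * (r * deriv (deriv h) r)) 0
      = (k : ℝ) * ((k : ℝ) - 1) * iteratedDeriv k h 0 := by
  have hd1 : ContDiff ℝ ∞ (deriv h) := (contDiff_infty_iff_deriv.mp hsm).2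
  have hd2 : ContDiff ℝ ∞ (deriv (deriv h)) := (contDiff_infty_iff_deriv.mp hd1).2
  cases k with
  | zero => simp
  | succ k =>
    rw [iter_id_mul (g := fun r => r * deriv (deriv h) r) (contDiff_id.mul hd2) k 0]
    cases k with
    | zero => simp
    | succ k =>
      rw [iter_id_mul hd2 k 0]
      rw [show iteratedDeriv k (deriv (deriv h)) 0 = iteratedDeriv (k+2) h 0 from by
        rw [iteratedDeriv_succ' (n := k+1), iteratedDeriv_succ' (n := k)]]
      push_cast; ring

end PartThree

section PartThreeB
open Filter Topology Set
variable {h : ℝ → ℝ}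

lemma phi_limits (hsm : ContDiff ℝ ∞ h)
    (hODE : ∀ r : ℝ, 0 < r →
      deriv (deriv h) r + (2 / r) * deriv h r - 6 * h r / r ^ 2 = (h r) ^ 3 - h r)
    (h0 : h 0 = 0) :
    Tendsto (fun r => (h r - betC h * r^2) / r^4) (𝓝[>] (0:ℝ)) (𝓝 (gamC h)) ∧
    Tendsto (fun r => ((r * deriv h r - 2 * h r) - 2 * gamC h * r^4) / r^6) (𝓝[>] (0:ℝ))
      (𝓝 (4 * epsC h)) ∧
    Tendsto (fun r => ((r * (r * deriv (deriv h) r) - 5 * (r * deriv h r)) + 8 * h r) / r^6)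
      (𝓝[>] (0:ℝ)) (𝓝 (8 * epsC h)) := by
  obtain ⟨hodd1, hodd3, hodd5⟩ := h_odd_derivs hsm hODE h0
  have hd1 : ContDiff ℝ ∞ (deriv h) := (contDiff_infty_iff_deriv.mp hsm).2
  have hd2 : ContDiff ℝ ∞ (deriv (deriv h)) := (contDiff_infty_iff_deriv.mp hd1).2
  have hrd1 : ContDiff ℝ ∞ (fun r => r * deriv h r) := contDiff_id.mul hd1
  have hrrd2 : ContDiff ℝ ∞ (fun r => r * (r * deriv (deriv h) r)) :=
    contDiff_id.mul (contDiff_id.mul hd2)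
  have hiD0 : iteratedDeriv 0 h 0 = 0 := by simpa using h0
  have hiD1 : iteratedDeriv 1 h 0 = 0 := by simpa [iteratedDeriv_one] using hodd1
  have hiD2 : iteratedDeriv 2 h 0 = 2 * betC h := by unfold betC; ring
  have hiD4 : iteratedDeriv 4 h 0 = 24 * gamC h := by unfold gamC; ring
  have hiD6 : iteratedDeriv 6 h 0 = 720 * epsC h := by unfold epsC; ring
  -- G
  have hGk : ∀ k, iteratedDeriv k (fun r => h r - betC h * r^2) 0
      = iteratedDeriv k h 0 - (if k = 2 then betC h * ((2:ℕ).factorial : ℝ) else 0) := by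
    intro k
    rw [iteratedDeriv_sub'' hsm (by fun_prop), iterderiv_monomial]
  have hG : Tendsto (fun r => (h r - betC h * r^2) / r^4) (𝓝[>] (0:ℝ)) (𝓝 (gamC h)) := by
    have := tendsto_div_pow (F := fun r => h r - betC h * r^2) (hsm.sub (by fun_prop)) 4
      (fun k hk => by
        interval_cases k <;> rw [hGk] <;>
          simp [hiD0, hiD1, hiD2, hiD4, hodd3, Nat.factorial] <;> ring)
    rw [hGk 4] at this
    norm_num [hiD4, Nat.factorial] at this
    convert this using 2 <;> (try norm_num) <;> (try ring)
  -- A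
  have hAk : ∀ k, iteratedDeriv k (fun r => (r * deriv h r - 2 * h r) - 2 * gamC h * r^4) 0
      = ((k:ℝ) * iteratedDeriv k h 0 - 2 * iteratedDeriv k h 0)
        - (if k = 4 then 2 * gamC h * ((4:ℕ).factorial : ℝ) else 0) := by
    intro k
    rw [iteratedDeriv_sub'' (hrd1.sub (contDiff_const.mul hsm)) (by fun_prop),
      iteratedDeriv_sub'' hrd1 (contDiff_const.mul hsm), iterderiv_monomial,
      iter_rd1 hsm, iteratedDeriv_const_mul'' hsm]
  have hA : Tendsto (fun r => ((r * deriv h r - 2 * h r) - 2 * gamC h * r^4) / r^6)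
      (𝓝[>] (0:ℝ)) (𝓝 (4 * epsC h)) := by
    have := tendsto_div_pow (F := fun r => (r * deriv h r - 2 * h r) - 2 * gamC h * r^4)
      ((hrd1.sub (contDiff_const.mul hsm)).sub (by fun_prop)) 6
      (fun k hk => by
        interval_cases k <;> rw [hAk] <;>
          simp [hiD0, hiD1, hiD2, hiD4, hodd3, hodd5, Nat.factorial] <;> ring)
    rw [hAk 6] at this
    norm_num [hiD6, Nat.factorial] at this
    convert this using 2 <;> (try norm_num) <;> (try ring)
  -- M
  have hMk : ∀ k, iteratedDeriv k
      (fun r => (r * (r * deriv (deriv h) r) - 5 * (r * deriv h r)) + 8 * h r) 0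
      = ((k:ℝ) * ((k:ℝ) - 1) * iteratedDeriv k h 0 - 5 * ((k:ℝ) * iteratedDeriv k h 0))
        + 8 * iteratedDeriv k h 0 := by
    intro k
    rw [iteratedDeriv_add'' (hrrd2.sub (contDiff_const.mul hrd1)) (contDiff_const.mul hsm),
      iteratedDeriv_sub'' hrrd2 (contDiff_const.mul hrd1),
      iter_rrd2 hsm, iteratedDeriv_const_mul'' hrd1, iter_rd1 hsm,
      iteratedDeriv_const_mul'' hsm]
  have hM : Tendsto (fun r => ((r * (r * deriv (deriv h) r) - 5 * (r * deriv h r)) + 8 * h r) / r^6)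
      (𝓝[>] (0:ℝ)) (𝓝 (8 * epsC h)) := by
    have := tendsto_div_pow
      (F := fun r => (r * (r * deriv (deriv h) r) - 5 * (r * deriv h r)) + 8 * h r)
      ((hrrd2.sub (contDiff_const.mul hrd1)).add (contDiff_const.mul hsm)) 6
      (fun k hk => by
        interval_cases k <;> rw [hMk] <;>
          simp [hiD0, hiD1, hiD2, hiD4, hodd3, hodd5] <;> ring)
    rw [hMk 6] at this
    norm_num [hiD6, Nat.factorial] at this
    convert this using 2 <;> (try norm_num) <;> (try ring)
  exact ⟨hG, hA, hM⟩

end PartThreeB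

section PartThreeC
open Filter Topology Set
variable {h : ℝ → ℝ}

lemma sqrt_tendsto_pos : Tendsto Real.sqrt (𝓝[>] (0:ℝ)) (𝓝[>] (0:ℝ)) := by
  apply tendsto_nhdsWithin_of_tendsto_nhds_of_eventually_within
  · have := (Real.continuous_sqrt.tendsto 0).mono_left (nhdsWithin_le_nhds (s := Ioi (0:ℝ)))
    simpa using this
  · filter_upwards [self_mem_nhdsWithin] with s hs
    exact Real.sqrt_pos.mpr hs

lemma phi_pack (hsm : ContDiff ℝ ∞ h)
    (hODE : ∀ r : ℝ, 0 < r →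
      deriv (deriv h) r + (2 / r) * deriv h r - 6 * h r / r ^ 2 = (h r) ^ 3 - h r)
    (h0 : h 0 = 0) :
    (∀ t, HasDerivAt (phiF h) (psiF h t) t) ∧
    (∀ t, HasDerivAt (psiF h) (chiF h t) t) ∧
    Continuous (chiF h) ∧
    (∀ r : ℝ, 0 ≤ r → h r = r ^ 2 * phiF h (r ^ 2)) ∧
    (∀ t : ℝ, 0 < t →
      4 * t * chiF h t + 14 * psiF h t = (t ^ 2 * (phiF h t) ^ 2 - 1) * phiF h t) := by
  obtain ⟨hG, hA, hM⟩ := phi_limits hsm hODE h0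
  have hdiff : Differentiable ℝ h := hsm.differentiable (by simp)
  have hd1 : ContDiff ℝ ∞ (deriv h) := (contDiff_infty_iff_deriv.mp hsm).2
  have hdiff1 : Differentiable ℝ (deriv h) := hd1.differentiable (by simp)
  have hd2 : ContDiff ℝ ∞ (deriv (deriv h)) := (contDiff_infty_iff_deriv.mp hd1).2
  have hphi0 : phiF h 0 = betC h := by simp [phiF]
  have hpsi0 : psiF h 0 = gamC h := by simp [psiF]
  have hchi0 : chiF h 0 = 2 * epsC h := by simp [chiF]
  have hphineg : ∀ t : ℝ, ¬ (0 < t) → phiF h t = betC h + gamC h * t + epsC h * t ^ 2 :=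
    fun t ht => if_neg ht
  have hpsineg : ∀ t : ℝ, ¬ (0 < t) → psiF h t = gamC h + 2 * epsC h * t :=
    fun t ht => if_neg ht
  -- derivative of phi at t < 0
  have hphi_lt : ∀ t : ℝ, t < 0 → HasDerivAt (phiF h) (psiF h t) t := by
    intro t ht
    have hev : (fun s => betC h + gamC h * s + epsC h * s ^ 2) =ᶠ[𝓝 t] phiF h := by
      filter_upwards [Iio_mem_nhds ht] with s hs
      exact (hphineg s (not_lt.mpr (le_of_lt hs))).symm
    have hpoly : HasDerivAt (fun s => betC h + gamC h * s + epsC h * s ^ 2)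
        (gamC h + 2 * epsC h * t) t := by
      have h1 := ((hasDerivAt_id t).const_mul (gamC h)).const_add (betC h)
      have h2 := (hasDerivAt_pow 2 t).const_mul (epsC h)
      have := h1.add h2
      refine this.congr_deriv ?_
      push_cast; ring
    rw [hpsineg t (not_lt.mpr (le_of_lt ht))]
    exact hpoly.congr_of_eventuallyEq hev.symm
  -- derivative of phi at t > 0
  have hphi_gt : ∀ t : ℝ, 0 < t → HasDerivAt (phiF h) (psiF h t) t := by
    intro t ht
    obtain ⟨s, hs, rfl⟩ : ∃ s : ℝ, 0 < s ∧ s ^ 2 = t :=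
      ⟨Real.sqrt t, Real.sqrt_pos.mpr ht, Real.sq_sqrt ht.le⟩
    have hsne : s ≠ 0 := ne_of_gt hs
    have htne : s ^ 2 ≠ 0 := by positivity
    have hrt : Real.sqrt (s ^ 2) = s := Real.sqrt_sq hs.le
    have hev : (fun u => h (Real.sqrt u) / u) =ᶠ[𝓝 (s ^ 2)] phiF h := by
      filter_upwards [Ioi_mem_nhds ht] with u hu
      exact (if_pos hu).symm
    have hsqrt : HasDerivAt Real.sqrt (1 / (2 * s)) (s ^ 2) := by
      have := Real.hasDerivAt_sqrt htne
      rwa [hrt] at this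
    have hh : HasDerivAt (fun u => h (Real.sqrt u)) (deriv h s * (1 / (2 * s))) (s ^ 2) := by
      have := (hdiff (Real.sqrt (s ^ 2))).hasDerivAt.comp (s ^ 2) hsqrt
      rwa [hrt] at this
    have hdv : HasDerivAt (fun u => h (Real.sqrt u) / u)
        ((deriv h s * (1 / (2 * s)) * s ^ 2 - h (Real.sqrt (s ^ 2)) * 1) / (s ^ 2) ^ 2) (s ^ 2) :=
      hh.div (hasDerivAt_id (s ^ 2)) htne
    rw [hrt] at hdv
    have hval : (deriv h s * (1 / (2 * s)) * s ^ 2 - h s * 1) / (s ^ 2) ^ 2 = psiF h (s ^ 2) := by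
      rw [show psiF h (s ^ 2) = (Real.sqrt (s ^ 2) * deriv h (Real.sqrt (s ^ 2))
          - 2 * h (Real.sqrt (s ^ 2))) / (2 * (s ^ 2) ^ 2) from if_pos ht, hrt]
      field_simp
    rw [← hval]
    exact hdv.congr_of_eventuallyEq hev.symm
  -- derivative of phi at 0
  have hphi_0 : HasDerivAt (phiF h) (psiF h 0) 0 := by
    rw [hasDerivAt_iff_tendsto_slope, ← nhdsLT_sup_nhdsGT (0:ℝ), tendsto_sup, hpsi0]
    constructor
    · have hev : (fun s => gamC h + epsC h * s) =ᶠ[𝓝[<] (0:ℝ)] slope (phiF h) 0 := by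
        filter_upwards [self_mem_nhdsWithin] with s hs
        have hsne : s ≠ 0 := ne_of_lt hs
        rw [slope_def_field, hphineg s (not_lt.mpr (le_of_lt hs)), hphi0]
        field_simp
        ring
      have : Tendsto (fun s : ℝ => gamC h + epsC h * s) (𝓝[<] (0:ℝ)) (𝓝 (gamC h)) := by
        have hcont : Continuous (fun s : ℝ => gamC h + epsC h * s) := by fun_prop
        have := (hcont.tendsto 0).mono_left (nhdsWithin_le_nhds (s := Iio (0:ℝ)))
        simpa using this
      exact this.congr' hev
    · have key := hG.comp sqrt_tendsto_pos
      refine key.congr' ?_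
      filter_upwards [self_mem_nhdsWithin] with u hu
      have hu0 : (0:ℝ) < u := hu
      obtain ⟨s, hs, rfl⟩ : ∃ s : ℝ, 0 < s ∧ s ^ 2 = u :=
        ⟨Real.sqrt u, Real.sqrt_pos.mpr hu0, Real.sq_sqrt hu0.le⟩
      have hsne : s ≠ 0 := ne_of_gt hs
      have hrt : Real.sqrt (s ^ 2) = s := Real.sqrt_sq hs.le
      rw [Function.comp_apply, hrt, slope_def_field, hphi0,
        show phiF h (s ^ 2) = h (Real.sqrt (s ^ 2)) / (s ^ 2) from if_pos hu0, hrt]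
      field_simp
      ring
  have hphideriv : ∀ t, HasDerivAt (phiF h) (psiF h t) t := by
    intro t
    rcases lt_trichotomy t 0 with ht | rfl | ht
    · exact hphi_lt t ht
    · exact hphi_0
    · exact hphi_gt t ht
  -- derivative of psi at t < 0
  have hpsi_lt : ∀ t : ℝ, t < 0 → HasDerivAt (psiF h) (chiF h t) t := by
    intro t ht
    have hev : (fun s => gamC h + 2 * epsC h * s) =ᶠ[𝓝 t] psiF h := by
      filter_upwards [Iio_mem_nhds ht] with s hs
      exact (hpsineg s (not_lt.mpr (le_of_lt hs))).symm
    have hpoly : HasDerivAt (fun s => gamC h + 2 * epsC h * s) (2 * epsC h) t := by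
      have := ((hasDerivAt_id t).const_mul (2 * epsC h)).const_add (gamC h)
      simpa using this
    rw [show chiF h t = 2 * epsC h from if_neg (not_lt.mpr (le_of_lt ht))]
    exact hpoly.congr_of_eventuallyEq hev.symm
  -- derivative of psi at t > 0
  have hpsi_gt : ∀ t : ℝ, 0 < t → HasDerivAt (psiF h) (chiF h t) t := by
    intro t ht
    obtain ⟨s, hs, rfl⟩ : ∃ s : ℝ, 0 < s ∧ s ^ 2 = t :=
      ⟨Real.sqrt t, Real.sqrt_pos.mpr ht, Real.sq_sqrt ht.le⟩
    have hsne : s ≠ 0 := ne_of_gt hs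
    have htne : s ^ 2 ≠ 0 := by positivity
    have hrt : Real.sqrt (s ^ 2) = s := Real.sqrt_sq hs.le
    have hev : (fun u => (Real.sqrt u * deriv h (Real.sqrt u) - 2 * h (Real.sqrt u)) / (2 * u ^ 2))
        =ᶠ[𝓝 (s ^ 2)] psiF h := by
      filter_upwards [Ioi_mem_nhds ht] with u hu
      exact (if_pos hu).symm
    have hsqrt : HasDerivAt Real.sqrt (1 / (2 * s)) (s ^ 2) := by
      have := Real.hasDerivAt_sqrt htne
      rwa [hrt] at this
    have hh : HasDerivAt (fun u => h (Real.sqrt u)) (deriv h s * (1 / (2 * s))) (s ^ 2) := by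
      have := (hdiff (Real.sqrt (s ^ 2))).hasDerivAt.comp (s ^ 2) hsqrt
      rwa [hrt] at this
    have hh1 : HasDerivAt (fun u => deriv h (Real.sqrt u))
        (deriv (deriv h) s * (1 / (2 * s))) (s ^ 2) := by
      have := (hdiff1 (Real.sqrt (s ^ 2))).hasDerivAt.comp (s ^ 2) hsqrt
      rwa [hrt] at this
    have hnum : HasDerivAt
        (fun u => Real.sqrt u * deriv h (Real.sqrt u) - 2 * h (Real.sqrt u))
        ((1 / (2 * s)) * deriv h s + s * (deriv (deriv h) s * (1 / (2 * s)))
          - 2 * (deriv h s * (1 / (2 * s)))) (s ^ 2) := by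
      have hmul : HasDerivAt (fun u => Real.sqrt u * deriv h (Real.sqrt u))
          ((1 / (2 * s)) * deriv h (Real.sqrt (s^2)) + Real.sqrt (s^2)
            * (deriv (deriv h) s * (1 / (2 * s)))) (s ^ 2) := hsqrt.mul hh1
      rw [hrt] at hmul
      exact hmul.sub (hh.const_mul 2)
    have hden : HasDerivAt (fun u : ℝ => 2 * u ^ 2) (2 * (2 * s ^ 2)) (s ^ 2) := by
      have := (hasDerivAt_pow 2 (s ^ 2)).const_mul (2:ℝ)
      refine this.congr_deriv ?_
      push_cast; ring
    have hdv := hnum.div hden (by positivity)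
    rw [hrt] at hdv
    have hval : (((1 / (2 * s)) * deriv h s + s * (deriv (deriv h) s * (1 / (2 * s)))
          - 2 * (deriv h s * (1 / (2 * s)))) * (2 * (s ^ 2) ^ 2)
          - (s * deriv h s - 2 * h s) * (2 * (2 * s ^ 2))) / (2 * (s ^ 2) ^ 2) ^ 2
        = chiF h (s ^ 2) := by
      rw [show chiF h (s ^ 2) = ((Real.sqrt (s ^ 2)) ^ 2 * deriv (deriv h) (Real.sqrt (s ^ 2))
          - 5 * Real.sqrt (s ^ 2) * deriv h (Real.sqrt (s ^ 2)) + 8 * h (Real.sqrt (s ^ 2)))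
          / (4 * (s ^ 2) ^ 3) from if_pos ht, hrt]
      field_simp
      ring
    rw [← hval]
    exact hdv.congr_of_eventuallyEq hev.symm
  -- derivative of psi at 0
  have hpsi_0 : HasDerivAt (psiF h) (chiF h 0) 0 := by
    rw [hasDerivAt_iff_tendsto_slope, ← nhdsLT_sup_nhdsGT (0:ℝ), tendsto_sup, hchi0]
    constructor
    · have hev : (fun _ : ℝ => 2 * epsC h) =ᶠ[𝓝[<] (0:ℝ)] slope (psiF h) 0 := by
        filter_upwards [self_mem_nhdsWithin] with s hs
        have hsne : s ≠ 0 := ne_of_lt hs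
        rw [slope_def_field, hpsineg s (not_lt.mpr (le_of_lt hs)), hpsi0]
        field_simp
        ring
      exact tendsto_const_nhds.congr' hev
    · have key := (hA.comp sqrt_tendsto_pos).div_const 2
      have he : (4 * epsC h) / 2 = 2 * epsC h := by ring
      rw [he] at key
      refine key.congr' ?_
      filter_upwards [self_mem_nhdsWithin] with u hu
      have hu0 : (0:ℝ) < u := hu
      obtain ⟨s, hs, rfl⟩ : ∃ s : ℝ, 0 < s ∧ s ^ 2 = u :=
        ⟨Real.sqrt u, Real.sqrt_pos.mpr hu0, Real.sq_sqrt hu0.le⟩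
      have hsne : s ≠ 0 := ne_of_gt hs
      have hrt : Real.sqrt (s ^ 2) = s := Real.sqrt_sq hs.le
      rw [Function.comp_apply, hrt, slope_def_field, hpsi0,
        show psiF h (s ^ 2) = (Real.sqrt (s ^ 2) * deriv h (Real.sqrt (s ^ 2))
          - 2 * h (Real.sqrt (s ^ 2))) / (2 * (s ^ 2) ^ 2) from if_pos hu0, hrt]
      field_simp
      ring
  have hpsideriv : ∀ t, HasDerivAt (psiF h) (chiF h t) t := by
    intro t
    rcases lt_trichotomy t 0 with ht | rfl | ht
    · exact hpsi_lt t ht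
    · exact hpsi_0
    · exact hpsi_gt t ht
  -- continuity of chi
  have hchicont : Continuous (chiF h) := by
    rw [continuous_iff_continuousAt]
    intro t
    rcases lt_trichotomy t 0 with ht | rfl | ht
    · apply ContinuousAt.congr (continuousAt_const (y := 2 * epsC h))
      filter_upwards [Iio_mem_nhds ht] with s hs
      exact (if_neg (not_lt.mpr (le_of_lt hs))).symm
    · rw [ContinuousAt, hchi0, ← nhdsLE_sup_nhdsGT (a := (0:ℝ)), tendsto_sup]
      constructor
      · apply tendsto_const_nhds.congr'
        filter_upwards [self_mem_nhdsWithin] with s hs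
        exact (if_neg (not_lt.mpr hs)).symm
      · have key := (hM.comp sqrt_tendsto_pos).div_const 4
        have he : (8 * epsC h) / 4 = 2 * epsC h := by ring
        rw [he] at key
        refine key.congr' ?_
        filter_upwards [self_mem_nhdsWithin] with u hu
        have hu0 : (0:ℝ) < u := hu
        obtain ⟨s, hs, rfl⟩ : ∃ s : ℝ, 0 < s ∧ s ^ 2 = u :=
          ⟨Real.sqrt u, Real.sqrt_pos.mpr hu0, Real.sq_sqrt hu0.le⟩
        have hsne : s ≠ 0 := ne_of_gt hs
        have hrt : Real.sqrt (s ^ 2) = s := Real.sqrt_sq hs.le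
        rw [Function.comp_apply, hrt,
          show chiF h (s ^ 2) = ((Real.sqrt (s ^ 2)) ^ 2 * deriv (deriv h) (Real.sqrt (s ^ 2))
            - 5 * Real.sqrt (s ^ 2) * deriv h (Real.sqrt (s ^ 2)) + 8 * h (Real.sqrt (s ^ 2)))
            / (4 * (s ^ 2) ^ 3) from if_pos hu0, hrt]
        field_simp
    · have hcont : ContinuousAt (fun u => ((Real.sqrt u) ^ 2 * deriv (deriv h) (Real.sqrt u)
          - 5 * Real.sqrt u * deriv h (Real.sqrt u) + 8 * h (Real.sqrt u)) / (4 * u ^ 3)) t := by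
        apply ContinuousAt.div
        · exact ((((Real.continuous_sqrt.pow 2).mul
            (hd2.continuous.comp Real.continuous_sqrt)).sub
            ((continuous_const.mul Real.continuous_sqrt).mul
              (hd1.continuous.comp Real.continuous_sqrt))).add
            (continuous_const.mul (hsm.continuous.comp Real.continuous_sqrt))).continuousAt
        · exact (continuous_const.mul (continuous_pow 3)).continuousAt
        · positivity
      apply hcont.congr
      filter_upwards [Ioi_mem_nhds ht] with s hs
      exact (if_pos hs).symm
  -- h r = r^2 * phi (r^2)
  have hrepr : ∀ r : ℝ, 0 ≤ r → h r = r ^ 2 * phiF h (r ^ 2) := by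
    intro r hr
    rcases eq_or_lt_of_le hr with rfl | hr'
    · simp [h0]
    · have hr2 : (0:ℝ) < r ^ 2 := by positivity
      rw [show phiF h (r ^ 2) = h (Real.sqrt (r ^ 2)) / r ^ 2 from if_pos hr2,
        Real.sqrt_sq hr'.le]
      field_simp
  -- ODE identity
  have hODEphi : ∀ t : ℝ, 0 < t →
      4 * t * chiF h t + 14 * psiF h t = (t ^ 2 * (phiF h t) ^ 2 - 1) * phiF h t := by
    intro t ht
    obtain ⟨s, hs, rfl⟩ : ∃ s : ℝ, 0 < s ∧ s ^ 2 = t :=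
      ⟨Real.sqrt t, Real.sqrt_pos.mpr ht, Real.sq_sqrt ht.le⟩
    have hsne : s ≠ 0 := ne_of_gt hs
    have hrt : Real.sqrt (s ^ 2) = s := Real.sqrt_sq hs.le
    have E : s ^ 2 * deriv (deriv h) s + 2 * s * deriv h s - 6 * h s
        = s ^ 2 * ((h s) ^ 3 - h s) := by
      have := hODE s hs
      field_simp at this
      nlinarith [this]
    rw [show chiF h (s ^ 2) = ((Real.sqrt (s ^ 2)) ^ 2 * deriv (deriv h) (Real.sqrt (s ^ 2))
          - 5 * Real.sqrt (s ^ 2) * deriv h (Real.sqrt (s ^ 2)) + 8 * h (Real.sqrt (s ^ 2)))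
          / (4 * (s ^ 2) ^ 3) from if_pos ht,
      show psiF h (s ^ 2) = (Real.sqrt (s ^ 2) * deriv h (Real.sqrt (s ^ 2))
          - 2 * h (Real.sqrt (s ^ 2))) / (2 * (s ^ 2) ^ 2) from if_pos ht,
      show phiF h (s ^ 2) = h (Real.sqrt (s ^ 2)) / (s ^ 2) from if_pos ht, hrt]
    field_simp
    linear_combination 2 * E
  exact ⟨hphideriv, hpsideriv, hchicont, hrepr, hODEphi⟩

end PartThreeC

section Part4
open Filter Topology Set

def c0 : ℝ := Real.sqrt (3 / 2)

def qE (x : E3) : ℝ := ∑ i, x i * x i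

def DqE (x : E3) : E3 →L[ℝ] ℝ :=
  ∑ i, ((x i) • EuclideanSpace.proj i + (x i) • EuclideanSpace.proj i)

def delt (a b : Fin 3) : ℝ := if a = b then 1 else 0

def pF (a b : Fin 3) (x : E3) : ℝ := x a * x b - delt a b / 3 * qE x

def DpF (a b : Fin 3) (x : E3) : E3 →L[ℝ] ℝ :=
  ((x a) • EuclideanSpace.proj b + (x b) • EuclideanSpace.proj a) - (delt a b / 3) • DqE x

def fF (h : ℝ → ℝ) (a b : Fin 3) (x : E3) : ℝ := c0 * (phiF h (qE x) * pF a b x)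

lemma qE_norm (x : E3) : qE x = ‖x‖ ^ 2 := by
  rw [EuclideanSpace.norm_eq, Real.sq_sqrt (by positivity)]
  unfold qE
  congr 1; funext i
  rw [Real.norm_eq_abs, sq_abs]; ring

lemma qE_pos {x : E3} (hx : x ≠ 0) : 0 < qE x := by
  rw [qE_norm]
  have : ‖x‖ ≠ 0 := norm_ne_zero_iff.mpr hx
  positivity

lemma hasFDerivAt_qE (x : E3) : HasFDerivAt qE (DqE x) x := by
  apply HasFDerivAt.fun_sum
  intro i _
  have hp := (EuclideanSpace.proj (𝕜 := ℝ) (ι := Fin 3) i).hasFDerivAt (x := x)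
  exact hp.mul hp

lemma single_coord (k j : Fin 3) :
    (EuclideanSpace.single k (1:ℝ)) j = if j = k then 1 else 0 :=
  EuclideanSpace.single_apply k 1 j

lemma DqE_single (x : E3) (k : Fin 3) : DqE x (EuclideanSpace.single k 1) = 2 * x k := by
  unfold DqE
  rw [ContinuousLinearMap.sum_apply]
  simp only [ContinuousLinearMap.add_apply, ContinuousLinearMap.smul_apply,
    EuclideanSpace.proj, PiLp.proj_apply, single_coord, smul_eq_mul, mul_ite, mul_one, mul_zero]
  rw [Finset.sum_add_distrib]
  simp [Finset.sum_ite_eq']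
  ring

lemma hasFDerivAt_pF (a b : Fin 3) (x : E3) : HasFDerivAt (pF a b) (DpF a b x) x := by
  have hpa := (EuclideanSpace.proj (𝕜 := ℝ) (ι := Fin 3) a).hasFDerivAt (x := x)
  have hpb := (EuclideanSpace.proj (𝕜 := ℝ) (ι := Fin 3) b).hasFDerivAt (x := x)
  have h1 : HasFDerivAt (fun y : E3 => y a * y b)
      ((x a) • EuclideanSpace.proj b + (x b) • EuclideanSpace.proj a) x := hpa.mul hpb
  have h2 : HasFDerivAt (fun y : E3 => delt a b / 3 * qE y) ((delt a b / 3) • DqE x) x :=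
    (hasFDerivAt_qE x).const_mul (delt a b / 3)
  exact h1.sub h2

lemma DpF_single (a b : Fin 3) (x : E3) (k : Fin 3) :
    DpF a b x (EuclideanSpace.single k 1)
      = x a * delt b k + x b * delt a k - delt a b / 3 * (2 * x k) := by
  unfold DpF
  rw [ContinuousLinearMap.sub_apply, ContinuousLinearMap.add_apply]
  simp only [ContinuousLinearMap.smul_apply, EuclideanSpace.proj, PiLp.proj_apply,
    single_coord, smul_eq_mul, DqE_single]
  unfold delt
  by_cases hak : a = k <;> by_cases hbk : b = k <;>
    simp [hak, hbk, eq_comm] <;> ring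

end Part4

section Part4B
open Filter Topology Set
variable {h : ℝ → ℝ}

def gF (h : ℝ → ℝ) (a b k : Fin 3) (y : E3) : ℝ :=
  c0 * (phiF h (qE y) * (y a * delt b k + y b * delt a k - delt a b / 3 * (2 * y k))
    + pF a b y * (psiF h (qE y) * (2 * y k)))

lemma hasFDerivAt_fF (hph : ∀ t, HasDerivAt (phiF h) (psiF h t) t) (a b : Fin 3) (y : E3) :
    HasFDerivAt (fF h a b)
      (c0 • (phiF h (qE y) • DpF a b y + pF a b y • (psiF h (qE y) • DqE y))) y := by
  have hphi : HasFDerivAt (fun z => phiF h (qE z)) (psiF h (qE y) • DqE y) y :=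
    (hph (qE y)).comp_hasFDerivAt y (hasFDerivAt_qE y)
  exact (hphi.mul (hasFDerivAt_pF a b y)).const_mul c0

lemma fderiv_fF (hph : ∀ t, HasDerivAt (phiF h) (psiF h t) t) (a b k : Fin 3) (y : E3) :
    fderiv ℝ (fF h a b) y (EuclideanSpace.single k 1) = gF h a b k y := by
  rw [(hasFDerivAt_fF hph a b y).fderiv]
  rw [ContinuousLinearMap.smul_apply, ContinuousLinearMap.add_apply,
    ContinuousLinearMap.smul_apply, ContinuousLinearMap.smul_apply,
    ContinuousLinearMap.smul_apply, DpF_single, DqE_single]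
  unfold gF
  simp only [smul_eq_mul]
  try ring

def TkV (h : ℝ → ℝ) (a b k : Fin 3) (x : E3) : ℝ :=
  c0 * (phiF h (qE x) * (2 * delt a k * delt b k - 2 * (delt a b / 3))
    + 2 * ((x a * delt b k + x b * delt a k - delt a b / 3 * (2 * x k))
        * (psiF h (qE x) * (2 * x k)))
    + pF a b x * (chiF h (qE x) * (2 * x k) * (2 * x k) + psiF h (qE x) * 2))

lemma hasFDerivAt_gF (hph : ∀ t, HasDerivAt (phiF h) (psiF h t) t)
    (hps : ∀ t, HasDerivAt (psiF h) (chiF h t) t) (a b k : Fin 3) (x : E3) :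
    HasFDerivAt (gF h a b k)
      (c0 • ((phiF h (qE x) • (delt b k • EuclideanSpace.proj a + delt a k • EuclideanSpace.proj b
            - (delt a b / 3) • ((2:ℝ) • EuclideanSpace.proj k))
          + (x a * delt b k + x b * delt a k - delt a b / 3 * (2 * x k))
              • (psiF h (qE x) • DqE x))
        + (pF a b x • (psiF h (qE x) • ((2:ℝ) • EuclideanSpace.proj k)
            + (2 * x k) • (chiF h (qE x) • DqE x))
          + (psiF h (qE x) * (2 * x k)) • DpF a b x))) x := by
  have hpa := (EuclideanSpace.proj (𝕜 := ℝ) (ι := Fin 3) a).hasFDerivAt (x := x)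
  have hpb := (EuclideanSpace.proj (𝕜 := ℝ) (ι := Fin 3) b).hasFDerivAt (x := x)
  have hpk := (EuclideanSpace.proj (𝕜 := ℝ) (ι := Fin 3) k).hasFDerivAt (x := x)
  have HA : HasFDerivAt (fun z => phiF h (qE z)) (psiF h (qE x) • DqE x) x :=
    (hph (qE x)).comp_hasFDerivAt x (hasFDerivAt_qE x)
  have HPsi : HasFDerivAt (fun z => psiF h (qE z)) (chiF h (qE x) • DqE x) x :=
    (hps (qE x)).comp_hasFDerivAt x (hasFDerivAt_qE x)
  have HB := ((hpa.mul_const (delt b k)).add (hpb.mul_const (delt a k))).sub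
      ((hpk.const_mul (2:ℝ)).const_mul (delt a b / 3))
  have HD := HPsi.mul (hpk.const_mul (2:ℝ))
  have HC : HasFDerivAt (pF a b) (DpF a b x) x := hasFDerivAt_pF a b x
  exact ((HA.mul HB).add (HC.mul HD)).const_mul c0

lemma fderiv_gF (hph : ∀ t, HasDerivAt (phiF h) (psiF h t) t)
    (hps : ∀ t, HasDerivAt (psiF h) (chiF h t) t) (a b k : Fin 3) (x : E3) :
    fderiv ℝ (gF h a b k) x (EuclideanSpace.single k 1) = TkV h a b k x := by
  rw [(hasFDerivAt_gF hph hps a b k x).fderiv]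
  have hsc : ∀ j : Fin 3, (EuclideanSpace.single k (1:ℝ)) j = delt j k := by
    intro j; rw [single_coord]; rfl
  have hkk : delt k k = 1 := by unfold delt; simp
  simp only [ContinuousLinearMap.smul_apply, ContinuousLinearMap.add_apply,
    ContinuousLinearMap.sub_apply, DpF_single, DqE_single, smul_eq_mul,
    EuclideanSpace.proj, PiLp.proj_apply, hsc, hkk]
  unfold TkV
  ring

lemma contDiff_fF (hphi2 : ContDiff ℝ 2 (phiF h)) (a b : Fin 3) :
    ContDiff ℝ 2 (fF h a b) := by
  have hq : ContDiff ℝ 2 qE := by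
    unfold qE
    apply ContDiff.sum
    intro i _
    exact ((EuclideanSpace.proj (𝕜 := ℝ) (ι := Fin 3) i).contDiff).mul
      ((EuclideanSpace.proj (𝕜 := ℝ) (ι := Fin 3) i).contDiff)
  have hp : ContDiff ℝ 2 (pF a b) := by
    unfold pF
    exact (((EuclideanSpace.proj (𝕜 := ℝ) (ι := Fin 3) a).contDiff).mul
      ((EuclideanSpace.proj (𝕜 := ℝ) (ι := Fin 3) b).contDiff)).sub
      ((contDiff_const (c := delt a b / 3)).mul hq)
  exact contDiff_const.mul ((hphi2.comp hq).mul hp)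

lemma lap_fF (hph : ∀ t, HasDerivAt (phiF h) (psiF h t) t)
    (hps : ∀ t, HasDerivAt (psiF h) (chiF h t) t)
    (hphi2 : ContDiff ℝ 2 (phiF h)) (a b : Fin 3) (x : E3) :
    lap (fF h a b) x = ∑ k : Fin 3, TkV h a b k x := by
  unfold lap
  refine Finset.sum_congr rfl (fun k _ => ?_)
  rw [iteratedFDeriv_two_apply]
  have hm0 : (![EuclideanSpace.single k (1:ℝ), EuclideanSpace.single k 1] : Fin 2 → E3) 0
      = EuclideanSpace.single k 1 := rfl
  have hm1 : (![EuclideanSpace.single k (1:ℝ), EuclideanSpace.single k 1] : Fin 2 → E3) 1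
      = EuclideanSpace.single k 1 := rfl
  rw [hm0, hm1]
  have hdF : DifferentiableAt ℝ (fderiv ℝ (fF h a b)) x := by
    have h1 : ContDiff ℝ 1 (fderiv ℝ (fF h a b)) :=
      (contDiff_fF hphi2 a b).fderiv_right (by norm_num)
    exact (h1.differentiable one_ne_zero).differentiableAt
  have swap := fderiv_clm_apply (c := fderiv ℝ (fF h a b))
    (u := fun _ => EuclideanSpace.single k (1:ℝ)) (x := x) hdF (differentiableAt_const _)
  have happ : (fun y => fderiv ℝ (fF h a b) y (EuclideanSpace.single k (1:ℝ))) = gF h a b k := by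
    funext y
    exact fderiv_fF hph a b k y
  calc fderiv ℝ (fderiv ℝ (fF h a b)) x (EuclideanSpace.single k 1) (EuclideanSpace.single k 1)
      = fderiv ℝ (fun y => fderiv ℝ (fF h a b) y (EuclideanSpace.single k (1:ℝ))) x
          (EuclideanSpace.single k 1) := by
        rw [swap]
        simp [ContinuousLinearMap.flip_apply]
    _ = TkV h a b k x := by rw [happ, fderiv_gF hph hps a b k x]

lemma sum_TkV (a b : Fin 3) (x : E3) :
    ∑ k : Fin 3, TkV h a b k x
      = c0 * ((4 * qE x * chiF h (qE x) + 14 * psiF h (qE x)) * pF a b x) := by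
  simp only [TkV, pF]
  set Φ := phiF h (qE x) with hΦ
  set Ψ := psiF h (qE x) with hΨ
  set Χ := chiF h (qE x) with hΧ
  simp only [qE, delt, Fin.sum_univ_three]
  fin_cases a <;> fin_cases b <;> simp <;> ring

end Part4B

section Part5
open Filter Topology Set
variable {h : ℝ → ℝ}

lemma phi_contDiff2 (hph : ∀ t, HasDerivAt (phiF h) (psiF h t) t)
    (hps : ∀ t, HasDerivAt (psiF h) (chiF h t) t)
    (hchi : Continuous (chiF h)) : ContDiff ℝ 2 (phiF h) := by
  have hdphi : deriv (phiF h) = psiF h := funext fun t => (hph t).deriv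
  have hdpsi : deriv (psiF h) = chiF h := funext fun t => (hps t).deriv
  rw [show (2 : WithTop ℕ∞) = 1 + 1 from rfl, contDiff_succ_iff_deriv]
  refine ⟨fun t => (hph t).differentiableAt, by simp, ?_⟩
  rw [hdphi, contDiff_one_iff_deriv]
  exact ⟨fun t => (hps t).differentiableAt, by rw [hdpsi]; exact hchi⟩

lemma hedgehog_eq (hrepr : ∀ r : ℝ, 0 ≤ r → h r = r ^ 2 * phiF h (r ^ 2))
    (x : E3) (a b : Fin 3) : hedgehog h x a b = fF h a b x := by
  by_cases hx : x = 0
  · subst hx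
    have hz : ∀ i : Fin 3, (0 : E3) i = 0 := fun i => rfl
    simp [hedgehog, fF, pF, qE, hz]
  · rw [hedgehog, if_neg hx]
    have hn : ‖x‖ ≠ 0 := norm_ne_zero_iff.mpr hx
    simp only [uni, Matrix.smul_apply, Matrix.sub_apply, Matrix.vecMulVec_apply,
      Matrix.smul_apply, Matrix.one_apply, smul_eq_mul]
    rw [hrepr ‖x‖ (norm_nonneg x)]
    unfold fF pF delt c0
    rw [qE_norm]
    field_simp
  
lemma nsq_hedgehog (hrepr : ∀ r : ℝ, 0 ≤ r → h r = r ^ 2 * phiF h (r ^ 2)) (x : E3) :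
    nsq (hedgehog h x) = (qE x) ^ 2 * (phiF h (qE x)) ^ 2 := by
  unfold nsq
  have e : ∀ a b, hedgehog h x a b = fF h a b x := fun a b => hedgehog_eq hrepr x a b
  rw [show Matrix.trace (hedgehog h x * hedgehog h x)
      = ∑ a, ∑ b, hedgehog h x a b * hedgehog h x b a from by
    simp [Matrix.trace, Matrix.mul_apply, Matrix.diag]]
  simp only [e, fF, pF]
  set Φ := phiF h (qE x) with hΦ
  have hc : c0 ^ 2 = 3 / 2 := Real.sq_sqrt (by norm_num)
  simp only [qE, delt, Fin.sum_univ_three]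
  norm_num [Fin.ext_iff]
  linear_combination ((2/3) * Φ^2 * (x 0 * x 0 + x 1 * x 1 + x 2 * x 2)^2) * hc

lemma unitn {x : E3} (hx : x ≠ 0) : unitVec (fun i => x i / ‖x‖) := by
  unfold unitVec
  have hn : ‖x‖ ≠ 0 := norm_ne_zero_iff.mpr hx
  have hq : ∑ i, (x i) ^ 2 = ‖x‖ ^ 2 := by
    rw [← qE_norm]; unfold qE; congr 1; funext i; ring
  simp only [div_pow, ← Finset.sum_div, hq]
  field_simp

lemma hedgehog_S0 (x : E3) : S0 (hedgehog h x) := by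
  unfold hedgehog
  by_cases hx : x = 0
  · rw [if_pos hx]
    constructor
    · simp [Matrix.IsSymm]
    · simp
  · rw [if_neg hx]
    constructor
    · unfold Matrix.IsSymm
      ext i j
      simp only [Matrix.transpose_apply, uni, Matrix.smul_apply, Matrix.sub_apply,
        Matrix.vecMulVec_apply, Matrix.smul_apply, Matrix.one_apply, smul_eq_mul]
      by_cases hij : i = j
      · subst hij; ring
      · rw [if_neg hij, if_neg (fun hji => hij hji.symm)]
        ring
    · have hu := unitn hx
      unfold unitVec at hu
      simp only [uni, Matrix.trace, Matrix.diag, Matrix.smul_apply, Matrix.sub_apply,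
        Matrix.vecMulVec_apply, Matrix.one_apply, smul_eq_mul, Fin.sum_univ_three] at hu ⊢
      have hsq : Real.sqrt (3/2) = Real.sqrt 3 / Real.sqrt 2 := by
        rw [← Real.sqrt_div (by norm_num : (0:ℝ) ≤ 3)]
      simp only [if_true, hsq]
      linear_combination (Real.sqrt 3 / Real.sqrt 2 * h ‖x‖) * hu

lemma hedgehog_uni (h0 : h 0 = 0) (hmono : MonotoneOn h (Set.Ici 0)) (x : E3) :
    ∃ (s : ℝ) (n : Fin 3 → ℝ), 0 ≤ s ∧ unitVec n ∧ hedgehog h x = uni s n := by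
  by_cases hx : x = 0
  · refine ⟨0, fun i => if i = 0 then 1 else 0, le_rfl, ?_, ?_⟩
    · unfold unitVec
      simp [Fin.sum_univ_three]
    · rw [hedgehog, if_pos hx]
      unfold uni
      rw [zero_smul]
  · refine ⟨Real.sqrt (3/2) * h ‖x‖, fun i => x i / ‖x‖, ?_, unitn hx, ?_⟩
    · apply mul_nonneg (Real.sqrt_nonneg _)
      have := hmono (self_mem_Ici) (mem_Ici.mpr (norm_nonneg x)) (norm_nonneg x)
      rwa [h0] at this
    · rw [hedgehog, if_neg hx]

end Part5


theorem stmt12 (h : ℝ → ℝ) (hreg : ContDiff ℝ (⊤ : ℕ∞) h)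
    (hODE : ∀ r : ℝ, 0 < r →
      deriv (deriv h) r + (2 / r) * deriv h r - 6 * h r / r ^ 2 = (h r) ^ 3 - h r)
    (h0 : h 0 = 0)
    (hlim : Filter.Tendsto h Filter.atTop (nhds 1))
    (hmono : MonotoneOn h (Set.Ici 0)) :
    (∀ i j, ContDiff ℝ 2 (fun x => hedgehog h x i j)) ∧
    (∀ (x : E3) (i j : Fin 3),
      lap (fun y => hedgehog h y i j) x = (nsq (hedgehog h x) - 1) * hedgehog h x i j) ∧
    (∀ x : E3, S0 (hedgehog h x)) ∧
    (∀ x : E3, ∃ (s : ℝ) (n : Fin 3 → ℝ), 0 ≤ s ∧ unitVec n ∧ hedgehog h x = uni s n) ∧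
    hedgehog h 0 = 0 := by
  have hsm : ContDiff ℝ ∞ h := hreg.of_le (mod_cast le_top)
  obtain ⟨hph, hps, hchi, hrepr, hident⟩ := phi_pack hsm hODE h0
  have hphi2 := phi_contDiff2 hph hps hchi
  have entry : ∀ (x : E3) (a b : Fin 3), hedgehog h x a b = fF h a b x :=
    fun x a b => hedgehog_eq hrepr x a b
  refine ⟨?_, ?_, fun x => hedgehog_S0 x, fun x => hedgehog_uni h0 hmono x,
    by simp [hedgehog]⟩
  · intro i j
    have hfun : (fun x => hedgehog h x i j) = fF h i j := funext fun x => entry x i j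
    rw [hfun]
    exact contDiff_fF hphi2 i j
  · intro x i j
    have hfun : (fun y => hedgehog h y i j) = fF h i j := funext fun y => entry y i j
    rw [hfun, lap_fF hph hps hphi2 i j x, sum_TkV, nsq_hedgehog hrepr x, entry x i j]
    by_cases hx : x = 0
    · subst hx
      have hz : ∀ i : Fin 3, (0 : E3) i = 0 := fun i => rfl
      simp [fF, pF, qE, hz]
    · have hq := qE_pos hx
      have hid := hident (qE x) hq
      unfold fF
      linear_combination (c0 * pF i j x) * hid
end
end
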